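/- arXiv:2509.04350 — 5 statements merged into one kernel-verified Lean document; each statement's English description precedes it below -/
import Mathlib

section
/- Let n ≥ 1 and let A ∈ M_n(ℤ) be non-singular. For every additive group homomorphism φ : G_A → G_A there exists a matrix T ∈ M_n(ℚ), all of whose entries lie in the subring ℛ = ℤ[1/det A] of ℚ, such that φ(v) = T·v for all v ∈ G_A. -/
open Matrix Polynomial

/-- The image of an integer matrix in `M_n(ℚ)`. -/
noncomputable def Qmat {n : ℕ} (A : Matrix (Fin n) (Fin n) ℤ) : Matrix (Fin n) (Fin n) ℚ :=
  A.map (Int.cast : ℤ → ℚ)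

/-- `G_A = {A^k x : x ∈ ℤ^n, k ∈ ℤ} ⊆ ℚ^n`, negative powers taken in `M_n(ℚ)`. -/
noncomputable def GA {n : ℕ} (A : Matrix (Fin n) (Fin n) ℤ) : Set (Fin n → ℚ) :=
  {w | ∃ (x : Fin n → ℤ) (k : ℤ), w = (Qmat A ^ k) *ᵥ (fun i => (x i : ℚ))}

/-- `G_A` as an additive subgroup of `ℚ^n` (it is closed under the group operations,
so the closure has carrier exactly `G_A`). -/
noncomputable def GAgrp {n : ℕ} (A : Matrix (Fin n) (Fin n) ℤ) : AddSubgroup (Fin n → ℚ) :=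
  AddSubgroup.closure (GA A)

/-- The subring `ℤ[1/d] = {a / d^m : a ∈ ℤ, m ∈ ℕ}` of `ℚ`. -/
def Zinv (d : ℤ) : Set ℚ :=
  {q | ∃ (a : ℤ) (m : ℕ), q = (a : ℚ) / (d : ℚ) ^ m}

/-- The radical of an integer: the product of its distinct positive prime divisors. -/
def rad (N : ℤ) : ℕ := ∏ p ∈ N.natAbs.primeFactors, p

lemma Qmat_pow {n : ℕ} (A : Matrix (Fin n) (Fin n) ℤ) (m : ℕ) :
    Qmat (A ^ m) = (Qmat A) ^ m := by
  simpa [Qmat, RingHom.mapMatrix_apply] using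
    map_pow ((Int.castRingHom ℚ).mapMatrix) A m

lemma Qmat_mulVec {n : ℕ} (B : Matrix (Fin n) (Fin n) ℤ) (x : Fin n → ℤ) :
    (Qmat B) *ᵥ (fun i => (x i : ℚ)) = fun i => ((B *ᵥ x) i : ℚ) := by
  funext i
  simp [Qmat, mulVec, dotProduct]

lemma keypow {n : ℕ} (A : Matrix (Fin n) (Fin n) ℤ) (hA : A.det ≠ 0) (k : ℤ) :
    ∃ (m : ℕ) (B : Matrix (Fin n) (Fin n) ℤ),
      ((A.det : ℚ)) ^ m • (Qmat A) ^ k = Qmat B := by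
  have hd : (A.det : ℚ) ≠ 0 := Int.cast_ne_zero.mpr hA
  rcases k with m | m
  · exact ⟨0, A ^ m, by simp [Qmat_pow]⟩
  · refine ⟨m + 1, (A ^ (m + 1)).adjugate, ?_⟩
    have hdet : ((Qmat A) ^ (m + 1)).det = (A.det : ℚ) ^ (m + 1) := by
      have h := RingHom.map_det (Int.castRingHom ℚ) (A ^ (m + 1))
      rw [← Qmat_pow]
      simp only [Qmat]
      rw [show ((A ^ (m + 1)).map (Int.cast : ℤ → ℚ)) =
          (Int.castRingHom ℚ).mapMatrix (A ^ (m + 1)) from rfl, ← h, Matrix.det_pow]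
      simp [pow_succ]
    rw [zpow_negSucc, Matrix.inv_def, hdet, Ring.inverse_eq_inv, smul_smul,
      mul_inv_cancel₀ (pow_ne_zero _ hd), one_smul, ← Qmat_pow]
    exact ((Int.castRingHom ℚ).map_adjugate _).symm

/-- Every element of `GAgrp A` can be scaled by a power of `det A` into `ℤ^n`. -/
lemma mem_scaled {n : ℕ} (A : Matrix (Fin n) (Fin n) ℤ) (hA : A.det ≠ 0)
    {w : Fin n → ℚ} (hw : w ∈ GAgrp A) :
    ∃ (m : ℕ) (x : Fin n → ℤ), ((A.det : ℚ)) ^ m • w = fun i => (x i : ℚ) := by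
  have hd : (A.det : ℚ) ≠ 0 := Int.cast_ne_zero.mpr hA
  set S : AddSubgroup (Fin n → ℚ) :=
    { carrier := {w | ∃ (m : ℕ) (x : Fin n → ℤ), ((A.det : ℚ)) ^ m • w = fun i => (x i : ℚ)}
      zero_mem' := ⟨0, 0, by funext i; simp⟩
      add_mem' := by
        rintro a b ⟨m1, x1, h1⟩ ⟨m2, x2, h2⟩
        refine ⟨m1 + m2, fun i => A.det ^ m2 * x1 i + A.det ^ m1 * x2 i, ?_⟩
        funext i
        have h1' := congr_fun h1 i
        have h2' := congr_fun h2 i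
        simp only [Pi.smul_apply, smul_eq_mul] at h1' h2' ⊢
        push_cast [-Int.cast_det]
        rw [pow_add, Pi.add_apply, mul_add]
        rw [show (A.det : ℚ) ^ m1 * (A.det : ℚ) ^ m2 * a i
            = (A.det : ℚ) ^ m2 * ((A.det : ℚ) ^ m1 * a i) by ring, h1',
          show (A.det : ℚ) ^ m1 * (A.det : ℚ) ^ m2 * b i
            = (A.det : ℚ) ^ m1 * ((A.det : ℚ) ^ m2 * b i) by ring, h2']
      neg_mem' := by
        rintro a ⟨m, x, h⟩
        refine ⟨m, fun i => -x i, ?_⟩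
        funext i
        have h' := congr_fun h i
        simp only [Pi.smul_apply, smul_eq_mul, Pi.neg_apply] at h' ⊢
        push_cast [-Int.cast_det]
        rw [mul_neg, h'] } with hS
  have hle : GAgrp A ≤ S := by
    refine (AddSubgroup.closure_le S).mpr ?_
    rintro w ⟨x, k, rfl⟩
    obtain ⟨m, B, hB⟩ := keypow A hA k
    exact ⟨m, B *ᵥ x, by rw [← Matrix.smul_mulVec, hB, Qmat_mulVec]⟩
  exact hle hw

theorem stmt1 (n : ℕ) (hn : 1 ≤ n) (A : Matrix (Fin n) (Fin n) ℤ) (hA : A.det ≠ 0)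
    (φ : GAgrp A →+ GAgrp A) :
    ∃ T : Matrix (Fin n) (Fin n) ℚ,
      (∀ i j, T i j ∈ Zinv A.det) ∧
      ∀ v : GAgrp A, (φ v : Fin n → ℚ) = T *ᵥ (v : Fin n → ℚ) := by
  have hd : (A.det : ℚ) ≠ 0 := Int.cast_ne_zero.mpr hA
  have hmemZ : ∀ x : Fin n → ℤ, (fun i => (x i : ℚ)) ∈ GAgrp A := fun x =>
    AddSubgroup.subset_closure ⟨x, 0, by simp⟩
  set ι : (Fin n → ℤ) →+ (GAgrp A) := AddMonoidHom.mk'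
    (fun x => ⟨fun i => (x i : ℚ), hmemZ x⟩)
    (fun x y => by ext i; push_cast; simp) with hι
  have hιcoe : ∀ x : Fin n → ℤ, ((ι x : GAgrp A) : Fin n → ℚ) = fun i => (x i : ℚ) :=
    fun x => rfl
  set T : Matrix (Fin n) (Fin n) ℚ :=
    Matrix.of (fun i j => ((φ (ι (Pi.single j 1)) : GAgrp A) : Fin n → ℚ) i) with hT
  have hTι : ∀ x : Fin n → ℤ,
      ((φ (ι x) : GAgrp A) : Fin n → ℚ) = T *ᵥ (fun i => (x i : ℚ)) := by
    intro x
    have hx : ι x = ∑ j, (x j) • ι (Pi.single j 1) := by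
      have hz : ∀ j, (x j) • ι (Pi.single j 1) = ι ((x j) • Pi.single j 1) :=
        fun j => (map_zsmul ι _ _).symm
      simp_rw [hz]
      rw [← map_sum]
      congr 1
      funext i
      simp [Pi.single_apply]
    rw [hx, map_sum]
    funext i
    rw [show ((∑ j, φ ((x j) • ι (Pi.single j 1)) : GAgrp A) : Fin n → ℚ)
        = ∑ j, ((φ ((x j) • ι (Pi.single j 1)) : GAgrp A) : Fin n → ℚ) by
      exact map_sum (GAgrp A).subtype _ _]
    simp only [map_zsmul, AddSubgroup.coe_zsmul, mulVec, dotProduct,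
      Finset.sum_apply, Pi.smul_apply]
    refine Finset.sum_congr rfl fun j _ => ?_
    rw [zsmul_eq_mul]
    push_cast
    rw [hT]
    simp [mul_comm]
  refine ⟨T, ?_, ?_⟩
  · intro i j
    obtain ⟨m, x, hx⟩ := mem_scaled A hA (φ (ι (Pi.single j 1))).2
    have h' := congr_fun hx i
    simp only [Pi.smul_apply, smul_eq_mul] at h'
    refine ⟨x i, m, ?_⟩
    rw [hT]
    simp only [Matrix.of_apply]
    field_simp [pow_ne_zero _ hd] at h' ⊢
    linarith [h']
  · intro v
    obtain ⟨m, x, hx⟩ := mem_scaled A hA v.2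
    have hvx : ι x = (A.det ^ m : ℤ) • v := by
      ext i
      have h' := congr_fun hx i
      simp only [Pi.smul_apply, smul_eq_mul] at h'
      rw [hιcoe]
      rw [AddSubgroup.coe_zsmul]
      simp only [Pi.smul_apply, zsmul_eq_mul]
      push_cast [-Int.cast_det]
      exact h'.symm
    have h1 := hTι x
    rw [hvx, map_zsmul] at h1
    simp only [AddSubgroup.coe_zsmul] at h1
    have h2 : T *ᵥ (fun i => (x i : ℚ)) = ((A.det : ℚ) ^ m) • (T *ᵥ (v : Fin n → ℚ)) := by
      rw [← hx, Matrix.mulVec_smul]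
    rw [h2] at h1
    have h3 : ((A.det : ℚ) ^ m) • ((φ v : GAgrp A) : Fin n → ℚ)
        = ((A.det : ℚ) ^ m) • (T *ᵥ (v : Fin n → ℚ)) := by
      rw [← h1]
      funext i
      simp only [Pi.smul_apply, zsmul_eq_mul, smul_eq_mul]
      push_cast
      ring
    exact smul_right_injective _ (pow_ne_zero m hd) h3
end

section
/- Let n ≥ 1 and let A ∈ M_n(ℤ) be non-singular with det A ≠ ±1, and suppose that for every prime p dividing det A the characteristic polynomial h_A reduces to x^n modulo p (i.e., P'(A) = ∅). Then for every T ∈ M_n(ℚ): (i) T·G_A ⊆ G_A if and only if every entry of T lies in ℛ = ℤ[1/det A]; and (ii) T is invertible with T·G_A = G_A if and only if T is invertible and all entries of both T and T⁻¹ lie in ℛ. -/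
open Matrix Polynomial

/- ### auxiliary lemmas -/

theorem zinv_int (d a : ℤ) : (a : ℚ) ∈ Zinv d := ⟨a, 0, by simp⟩

theorem zinv_add {d : ℤ} (hd : d ≠ 0) {x y : ℚ} (hx : x ∈ Zinv d) (hy : y ∈ Zinv d) :
    x + y ∈ Zinv d := by
  obtain ⟨a, m, rfl⟩ := hx; obtain ⟨b, k, rfl⟩ := hy
  refine ⟨a * d ^ k + b * d ^ m, m + k, ?_⟩
  have hd' : (d:ℚ) ≠ 0 := Int.cast_ne_zero.mpr hd
  push_cast
  rw [div_add_div _ _ (pow_ne_zero m hd') (pow_ne_zero k hd'), pow_add]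
  ring_nf

theorem zinv_mul {d : ℤ} {x y : ℚ} (hx : x ∈ Zinv d) (hy : y ∈ Zinv d) :
    x * y ∈ Zinv d := by
  obtain ⟨a, m, rfl⟩ := hx; obtain ⟨b, k, rfl⟩ := hy
  exact ⟨a * b, m + k, by push_cast; rw [pow_add, div_mul_div_comm]⟩

theorem zinv_sum {ι : Type*} {d : ℤ} (hd : d ≠ 0) {s : Finset ι} {f : ι → ℚ}
    (h : ∀ i ∈ s, f i ∈ Zinv d) : (∑ i ∈ s, f i) ∈ Zinv d := by
  classical
  induction s using Finset.induction with
  | empty => exact ⟨0, 0, by simp⟩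
  | @insert x s hx ih =>
      rw [Finset.sum_insert hx]
      exact zinv_add hd (h _ (Finset.mem_insert_self _ _))
        (ih fun i hi => h i (Finset.mem_insert_of_mem hi))

/-- entries of a matrix–vector product stay in `Zinv d`. -/
theorem zinv_mulVec {n : ℕ} {d : ℤ} (hd : d ≠ 0) {M : Matrix (Fin n) (Fin n) ℚ}
    {v : Fin n → ℚ} (hM : ∀ i j, M i j ∈ Zinv d) (hv : ∀ j, v j ∈ Zinv d) :
    ∀ i, (M *ᵥ v) i ∈ Zinv d := by
  intro i
  rw [mulVec, dotProduct]
  exact zinv_sum hd fun j _ => zinv_mul (hM i j) (hv j)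

theorem zinv_matmul {n : ℕ} {d : ℤ} (hd : d ≠ 0) {M N : Matrix (Fin n) (Fin n) ℚ}
    (hM : ∀ i j, M i j ∈ Zinv d) (hN : ∀ i j, N i j ∈ Zinv d) :
    ∀ i j, (M * N) i j ∈ Zinv d := by
  intro i j
  rw [Matrix.mul_apply]
  exact zinv_sum hd fun k _ => zinv_mul (hM i k) (hN k j)

theorem zinv_pow {n : ℕ} {d : ℤ} (hd : d ≠ 0) {M : Matrix (Fin n) (Fin n) ℚ}
    (hM : ∀ i j, M i j ∈ Zinv d) (k : ℕ) : ∀ i j, (M ^ k) i j ∈ Zinv d := by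
  induction k with
  | zero =>
      intro i j
      rw [pow_zero, Matrix.one_apply]
      by_cases h : i = j
      · rw [if_pos h]; exact ⟨1, 0, by norm_num⟩
      · rw [if_neg h]; exact ⟨0, 0, by norm_num⟩
  | succ k ih =>
      rw [pow_succ]
      exact zinv_matmul hd ih hM

theorem Qmat_inv_mem {n : ℕ} (A : Matrix (Fin n) (Fin n) ℤ) (hA : A.det ≠ 0) :
    ∀ i j, (Qmat A)⁻¹ i j ∈ Zinv A.det := by
  intro i j
  have hadj : (Qmat A).adjugate = (A.adjugate).map (Int.cast : ℤ → ℚ) :=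
    ((Int.castRingHom ℚ).map_adjugate A).symm
  have hdet : (Qmat A).det = (A.det : ℚ) := (RingHom.map_det (Int.castRingHom ℚ) A).symm
  rw [Matrix.inv_def, Matrix.smul_apply, hadj, hdet, Ring.inverse_eq_inv]
  refine ⟨A.adjugate i j, 1, ?_⟩
  rw [pow_one, Matrix.map_apply, smul_eq_mul, inv_mul_eq_div]

theorem nat_dvd_rad_pow (N : ℕ) (hN : N ≠ 0) : N ∣ (∏ p ∈ N.primeFactors, p) ^ N := by
  conv_lhs => rw [← Nat.factorization_prod_pow_eq_self hN]
  rw [Finsupp.prod, ← Finset.prod_pow]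
  exact Finset.prod_dvd_prod_of_dvd _ _ fun p _ =>
    pow_dvd_pow p (le_of_lt (Nat.factorization_lt _ hN))

theorem prime_dvd_pow_entries {n : ℕ} (A : Matrix (Fin n) (Fin n) ℤ)
    {p : ℕ} (hp : p.Prime)
    (hch : A.charpoly.map (Int.castRingHom (ZMod p)) = X ^ n) :
    ∀ i j, (p : ℤ) ∣ (A ^ n) i j := by
  haveI : Fact p.Prime := ⟨hp⟩
  set M : Matrix (Fin n) (Fin n) (ZMod p) := A.map (Int.castRingHom (ZMod p)) with hM
  have hchar : M.charpoly = X ^ n := by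
    rw [hM, Matrix.charpoly_map]; exact hch
  have hM0 : M ^ n = 0 := by
    have h := M.aeval_self_charpoly
    rwa [hchar, map_pow, aeval_X] at h
  intro i j
  have hmap : (A ^ n).map (Int.castRingHom (ZMod p)) = M ^ n := by
    rw [hM]
    exact map_pow (RingHom.mapMatrix (Int.castRingHom (ZMod p))) A n
  have : (((A ^ n) i j : ℤ) : ZMod p) = 0 := by
    have := congrFun (congrFun (hmap.trans hM0) i) j
    simpa [Matrix.map_apply] using this
  exact (ZMod.intCast_zmod_eq_zero_iff_dvd _ p).mp this

theorem rad_dvd_pow_entries {n : ℕ} (A : Matrix (Fin n) (Fin n) ℤ) (hA : A.det ≠ 0)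
    (hP' : ∀ p : ℕ, p.Prime → (p : ℤ) ∣ A.det →
      A.charpoly.map (Int.castRingHom (ZMod p)) = X ^ n) :
    ∀ i j, ((rad A.det : ℕ) : ℤ) ∣ (A ^ n) i j := by
  intro i j
  have h : (rad A.det : ℕ) ∣ ((A ^ n) i j).natAbs := by
    refine Finset.prod_primes_dvd _ (fun p hp => (Nat.prime_of_mem_primeFactors hp).prime)
      (fun p hp => ?_)
    have hpp := Nat.prime_of_mem_primeFactors hp
    have hpd : (p : ℤ) ∣ A.det := by
      have := Nat.dvd_of_mem_primeFactors hp
      exact Int.dvd_natAbs.mp (Int.natCast_dvd_natCast.mpr this)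
    have := prime_dvd_pow_entries A hpp (hP' p hpp hpd) i j
    exact Int.natCast_dvd_natCast.mp (Int.dvd_natAbs.mpr this)
  exact Int.dvd_natAbs.mp (Int.natCast_dvd_natCast.mpr h)

theorem rad_pow_dvd_entries {n : ℕ} (A : Matrix (Fin n) (Fin n) ℤ)
    (hbase : ∀ i j, ((rad A.det : ℕ) : ℤ) ∣ (A ^ n) i j) (k : ℕ) :
    ∀ i j, ((rad A.det : ℕ) : ℤ) ^ k ∣ (A ^ (n * k)) i j := by
  induction k with
  | zero => intro i j; simp
  | succ k ih =>
      intro i j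
      have : A ^ (n * (k + 1)) = A ^ (n * k) * A ^ n := by
        rw [← pow_add, Nat.mul_succ]
      rw [this, Matrix.mul_apply, pow_succ]
      exact Finset.dvd_sum fun l _ => mul_dvd_mul (ih i l) (hbase l j)

/-- For every `m` there is `K` and an integer matrix `B` with `A ^ K = A.det ^ m • B`. -/
theorem exists_pow_eq_det_smul {n : ℕ} (A : Matrix (Fin n) (Fin n) ℤ) (hA : A.det ≠ 0)
    (hP' : ∀ p : ℕ, p.Prime → (p : ℤ) ∣ A.det →
      A.charpoly.map (Int.castRingHom (ZMod p)) = X ^ n) (m : ℕ) :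
    ∃ (K : ℕ) (B : Matrix (Fin n) (Fin n) ℤ), A ^ K = (A.det ^ m) • B := by
  set t := A.det.natAbs with ht
  have ht0 : t ≠ 0 := Int.natAbs_ne_zero.mpr hA
  set r := rad A.det with hr
  -- d^m divides r^(t*m)
  have hdr : A.det ^ m ∣ ((r : ℤ)) ^ (t * m) := by
    have h1 : (t : ℤ) ∣ (r : ℤ) ^ t := by
      have := nat_dvd_rad_pow t ht0
      exact_mod_cast Int.natCast_dvd_natCast.mpr this
    have h2 : A.det ∣ (r : ℤ) ^ t := (Int.natAbs_dvd).mp h1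
    calc A.det ^ m ∣ ((r : ℤ) ^ t) ^ m := pow_dvd_pow_of_dvd h2 m
      _ = (r : ℤ) ^ (t * m) := by rw [← pow_mul]
  -- r^(t*m) divides entries of A^(n*(t*m))
  have hdvd : ∀ i j, A.det ^ m ∣ (A ^ (n * (t * m))) i j := fun i j =>
    dvd_trans hdr (rad_pow_dvd_entries A (rad_dvd_pow_entries A hA hP') (t * m) i j)
  refine ⟨n * (t * m), fun i j => (A ^ (n * (t * m))) i j / A.det ^ m, ?_⟩
  ext i j
  exact (Int.mul_ediv_cancel' (hdvd i j)).symm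

/-- `G_A` is exactly the set of vectors with all entries in `ℤ[1/det A]`. -/
theorem GA_eq {n : ℕ} (A : Matrix (Fin n) (Fin n) ℤ) (hA : A.det ≠ 0)
    (hP' : ∀ p : ℕ, p.Prime → (p : ℤ) ∣ A.det →
      A.charpoly.map (Int.castRingHom (ZMod p)) = X ^ n) :
    GA A = {w | ∀ i, w i ∈ Zinv A.det} := by
  have hdQ : ((A.det : ℚ)) ≠ 0 := Int.cast_ne_zero.mpr hA
  have hdet : (Qmat A).det = (A.det : ℚ) := (RingHom.map_det (Int.castRingHom ℚ) A).symm
  have hunit : IsUnit (Qmat A).det := by rw [hdet]; exact isUnit_iff_ne_zero.mpr hdQ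
  have hQ : ∀ i j, Qmat A i j ∈ Zinv A.det := fun i j => zinv_int _ _
  ext w
  constructor
  · rintro ⟨x, k, rfl⟩
    intro i
    have hmat : ∀ i j, (Qmat A ^ k) i j ∈ Zinv A.det := by
      cases k with
      | ofNat j =>
          rw [Int.ofNat_eq_coe, zpow_natCast]
          exact zinv_pow hA hQ j
      | negSucc j =>
          rw [zpow_negSucc, ← Matrix.inv_pow']
          exact zinv_pow hA (Qmat_inv_mem A hA) (j + 1)
    exact zinv_mulVec hA hmat (fun j => zinv_int _ _) i
  · intro hw
    -- write w = z / d^M with z integral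
    choose a m hm using hw
    set M : ℕ := Finset.univ.sup m with hM
    set z : Fin n → ℤ := fun i => a i * A.det ^ (M - m i) with hz
    have hwz : ∀ i, (A.det : ℚ) ^ M * w i = (z i : ℚ) := by
      intro i
      have hle : m i ≤ M := Finset.le_sup (Finset.mem_univ i)
      rw [hm i, hz]
      simp only [Int.cast_mul, Int.cast_pow]
      rw [← Nat.sub_add_cancel hle, pow_add, Nat.add_sub_cancel]
      field_simp
    obtain ⟨K, B, hKB⟩ := exists_pow_eq_det_smul A hA hP' M
    refine ⟨B *ᵥ z, -(K : ℤ), ?_⟩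
    have hQK : Qmat (A ^ K) = Qmat A ^ K :=
      map_pow (RingHom.mapMatrix (Int.castRingHom ℚ)) A K
    have hdetK : IsUnit (Qmat A ^ K).det := by
      rw [Matrix.det_pow]; exact hunit.pow K
    have key : (Qmat A ^ K) *ᵥ w = fun i => ((B *ᵥ z) i : ℚ) := by
      funext i
      rw [← hQK]
      show ∑ j, ((A ^ K) i j : ℚ) * w j = _
      have : ∀ j, ((A ^ K) i j : ℚ) * w j = (B i j : ℚ) * (z j : ℚ) := by
        intro j
        have : (A ^ K) i j = A.det ^ M * B i j := by rw [hKB]; rfl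
        rw [this]
        simp only [Int.cast_mul, Int.cast_pow]
        rw [mul_comm ((A.det:ℚ)^M) _, mul_assoc, hwz j]
      rw [Finset.sum_congr rfl fun j _ => this j]
      show _ = ((∑ j, B i j * z j : ℤ) : ℚ)
      push_cast
      rfl
    rw [Matrix.zpow_neg_natCast, ← key, Matrix.mulVec_mulVec,
      Matrix.nonsing_inv_mul _ hdetK, Matrix.one_mulVec]

theorem stmt3 (n : ℕ) (hn : 1 ≤ n) (A : Matrix (Fin n) (Fin n) ℤ)
    (hA : A.det ≠ 0) (hA1 : A.det ≠ 1) (hA1' : A.det ≠ -1)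
    (hP' : ∀ p : ℕ, p.Prime → (p : ℤ) ∣ A.det →
      A.charpoly.map (Int.castRingHom (ZMod p)) = X ^ n) :
    ∀ T : Matrix (Fin n) (Fin n) ℚ,
      ((∀ w ∈ GA A, T *ᵥ w ∈ GA A) ↔ ∀ i j, T i j ∈ Zinv A.det) ∧
      ((IsUnit T ∧ (fun w => T *ᵥ w) '' GA A = GA A) ↔
        (IsUnit T ∧ (∀ i j, T i j ∈ Zinv A.det) ∧ ∀ i j, T⁻¹ i j ∈ Zinv A.det)) := by
  have hGA := GA_eq A hA hP'
  -- part (i) as a general statement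
  have part1 : ∀ T : Matrix (Fin n) (Fin n) ℚ,
      (∀ w ∈ GA A, T *ᵥ w ∈ GA A) ↔ ∀ i j, T i j ∈ Zinv A.det := by
    intro T
    constructor
    · intro h i j
      -- apply to the j-th standard basis vector
      have hbasis : (fun i => ((Pi.single j 1 : Fin n → ℤ) i : ℚ)) ∈ GA A :=
        ⟨Pi.single j 1, 0, by rw [zpow_zero, Matrix.one_mulVec]⟩
      have := h _ hbasis
      rw [hGA] at this
      have hcol : (T *ᵥ fun i => ((Pi.single j 1 : Fin n → ℤ) i : ℚ)) i = T i j := by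
        have hv : (fun i => ((Pi.single j 1 : Fin n → ℤ) i : ℚ)) = Pi.single j (1 : ℚ) := by
          funext k
          by_cases hk : k = j <;> simp [Pi.single_apply, hk]
        rw [hv, Matrix.mulVec_single]
        simp
      rw [← hcol]
      exact this i
    · intro hT w hw
      rw [hGA] at hw ⊢
      exact fun i => zinv_mulVec hA hT hw i
  intro T
  refine ⟨part1 T, ?_⟩
  constructor
  · rintro ⟨hT, himg⟩
    have hTdet : IsUnit T.det := T.isUnit_iff_isUnit_det.mp hT
    refine ⟨hT, (part1 T).mp ?_, (part1 T⁻¹).mp ?_⟩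
    · intro w hw
      rw [← himg]
      exact ⟨w, hw, rfl⟩
    · intro w hw
      rw [← himg] at hw
      obtain ⟨u, hu, rfl⟩ := hw
      have : T⁻¹ *ᵥ (T *ᵥ u) = u := by
        rw [Matrix.mulVec_mulVec, Matrix.nonsing_inv_mul _ hTdet, Matrix.one_mulVec]
      rwa [this]
  · rintro ⟨hT, hTm, hTim⟩
    have hTdet : IsUnit T.det := T.isUnit_iff_isUnit_det.mp hT
    refine ⟨hT, ?_⟩
    ext w
    constructor
    · rintro ⟨u, hu, rfl⟩
      exact (part1 T).mpr hTm u hu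
    · intro hw
      refine ⟨T⁻¹ *ᵥ w, (part1 T⁻¹).mpr hTim w hw, ?_⟩
      show T *ᵥ (T⁻¹ *ᵥ w) = w
      rw [Matrix.mulVec_mulVec, Matrix.mul_nonsing_inv _ hTdet, Matrix.one_mulVec]
end

section
/- Let n ≥ 1, let A ∈ M_n(ℤ) be non-singular, let v ∈ ℚ^n, and let k be a positive integer such that k·v ∈ ℤ^n. Then v ∈ G_A if and only if there exists a natural number i < k^(n²) such that A^i v ∈ ℤ^n. -/
open Matrix Polynomial

lemma map_mulVec_int {n : ℕ} {R : Type*} [CommRing R] (A : Matrix (Fin n) (Fin n) ℤ)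
    (x : Fin n → ℤ) :
    (A.map (Int.cast : ℤ → R)) *ᵥ (fun i => (x i : R)) = fun i => ((A *ᵥ x) i : R) := by
  funext i
  simp [Matrix.mulVec, dotProduct, Matrix.map_apply]

lemma map_pow_mulVec_int {n : ℕ} {R : Type*} [CommRing R] (A : Matrix (Fin n) (Fin n) ℤ)
    (m : ℕ) (x : Fin n → ℤ) :
    ((A.map (Int.cast : ℤ → R)) ^ m) *ᵥ (fun i => (x i : R)) = fun i => ((A ^ m *ᵥ x) i : R) := by
  induction m with
  | zero => simp [Matrix.one_mulVec]
  | succ m ih =>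
      rw [pow_succ', pow_succ', ← Matrix.mulVec_mulVec, ← Matrix.mulVec_mulVec, ih,
        map_mulVec_int]

lemma qmat_pow_mulVec {n : ℕ} (A : Matrix (Fin n) (Fin n) ℤ) (m : ℕ) (x : Fin n → ℤ) :
    (Qmat A ^ m) *ᵥ (fun i => (x i : ℚ)) = fun i => ((A ^ m *ᵥ x) i : ℚ) :=
  map_pow_mulVec_int A m x

theorem stmt5 (n : ℕ) (hn : 1 ≤ n) (A : Matrix (Fin n) (Fin n) ℤ) (hA : A.det ≠ 0)
    (v : Fin n → ℚ) (k : ℕ) (hk : 0 < k)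
    (hkv : ∃ w : Fin n → ℤ, ∀ i, (k : ℚ) * v i = (w i : ℚ)) :
    v ∈ GA A ↔
      ∃ i : ℕ, i < k ^ (n ^ 2) ∧
        ∃ w : Fin n → ℤ, (Qmat A ^ i) *ᵥ v = fun j => (w j : ℚ) := by
  obtain ⟨w0, hw0⟩ := hkv
  have hdet : IsUnit (Qmat A).det := by
    have h1 : (Qmat A).det = ((A.det : ℤ) : ℚ) :=
      ((RingHom.map_det (Int.castRingHom ℚ) A)).symm
    rw [h1]
    exact isUnit_iff_ne_zero.mpr (by exact_mod_cast hA)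
  haveI : NeZero k := ⟨hk.ne'⟩
  constructor
  · rintro ⟨x, m, rfl⟩
    set u : Fin n → ℚ := (Qmat A ^ m) *ᵥ fun j => (x j : ℚ) with hu
    -- Step 1: some power makes it integral
    have hex : ∃ i : ℕ, ∃ w : Fin n → ℤ,
        (Qmat A ^ (i : ℕ)) *ᵥ u = fun j => (w j : ℚ) := by
      rcases le_or_gt 0 m with hm | hm
      · refine ⟨0, A ^ m.toNat *ᵥ x, ?_⟩
        have h2 : (Qmat A) ^ m = (Qmat A) ^ m.toNat := by
          rw [← zpow_natCast, Int.toNat_of_nonneg hm]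
        rw [pow_zero, Matrix.one_mulVec, hu, h2, qmat_pow_mulVec]
      · refine ⟨(-m).toNat, x, ?_⟩
        rw [hu, Matrix.mulVec_mulVec, ← zpow_natCast (Qmat A) (-m).toNat,
          ← Matrix.zpow_add hdet]
        have h3 : ((-m).toNat : ℤ) + m = 0 := by omega
        rw [h3, zpow_zero, Matrix.one_mulVec]
    clear_value u

    -- Step 2: relate integrality of A^i u to vanishing mod k
    set y : ℕ → Fin n → ℤ := fun j => A ^ j *ᵥ w0 with hy
    have hyv : ∀ (i : ℕ) (l : Fin n),
        ((y i l : ℤ) : ℚ) = (k : ℚ) * ((Qmat A ^ i) *ᵥ u) l := by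
      intro i l
      have h1 : (fun j => ((w0 j : ℤ) : ℚ)) = (k : ℚ) • u := by
        funext j
        simp only [Pi.smul_apply, smul_eq_mul]
        exact (hw0 j).symm
      calc ((y i l : ℤ) : ℚ) = ((Qmat A ^ i) *ᵥ fun j => ((w0 j : ℤ) : ℚ)) l := by
            rw [qmat_pow_mulVec]
        _ = ((Qmat A ^ i) *ᵥ ((k : ℚ) • u)) l := by rw [h1]
        _ = (k : ℚ) * ((Qmat A ^ i) *ᵥ u) l := by
            rw [Matrix.mulVec_smul]; rfl
    set z : ℕ → Fin n → ZMod k := fun j l => ((y j l : ℤ) : ZMod k) with hzdef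
    have hPz : ∀ i : ℕ,
        (∃ w : Fin n → ℤ, (Qmat A ^ i) *ᵥ u = fun j => (w j : ℚ)) ↔ z i = 0 := by
      intro i
      constructor
      · rintro ⟨w, hw⟩
        funext l
        have h2 : ((y i l : ℤ) : ℚ) = (((k : ℤ) * w l : ℤ) : ℚ) := by
          rw [hyv i l, hw]; push_cast; ring
        have h3 : y i l = (k : ℤ) * w l := by exact_mod_cast h2
        simp only [hzdef, Pi.zero_apply]
        rw [ZMod.intCast_zmod_eq_zero_iff_dvd]
        exact ⟨w l, h3⟩
      · intro hz0
        have hdvd : ∀ l, (k : ℤ) ∣ y i l := by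
          intro l
          have := congrFun hz0 l
          simpa only [hzdef, Pi.zero_apply, ZMod.intCast_zmod_eq_zero_iff_dvd] using this
        refine ⟨fun l => y i l / (k : ℤ), ?_⟩
        funext l
        have h4 : (k : ℤ) * (y i l / (k : ℤ)) = y i l := Int.mul_ediv_cancel' (hdvd l)
        have h5 : (k : ℚ) ≠ 0 := by exact_mod_cast hk.ne'
        have h6 : (k : ℚ) * ((Qmat A ^ i) *ᵥ u) l = (k : ℚ) * ((y i l / (k : ℤ) : ℤ) : ℚ) := by
          have h7 : ((y i l : ℤ) : ℚ) = (k : ℚ) * ((y i l / (k : ℤ) : ℤ) : ℚ) := by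
            calc ((y i l : ℤ) : ℚ) = (((k : ℤ) * (y i l / (k : ℤ)) : ℤ) : ℚ) := by rw [h4]
              _ = (k : ℚ) * ((y i l / (k : ℤ) : ℤ) : ℚ) := by push_cast; ring
          rw [← hyv i l, h7]
        exact mul_left_cancel₀ h5 h6
    -- Step 3: the recurrence mod k and pigeonhole
    have hzrec : ∀ a t : ℕ,
        z (a + t) = ((A.map (Int.cast : ℤ → ZMod k)) ^ t) *ᵥ (z a) := by
      intro a t
      have h7 : y (a + t) = A ^ t *ᵥ y a := by
        simp only [hy, Matrix.mulVec_mulVec, ← pow_add, add_comm a t]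
      funext l
      have := congrFun (map_pow_mulVec_int (R := ZMod k) A t (y a)) l
      simp only [hzdef, h7]
      exact this.symm
    obtain ⟨i1, hwi⟩ := hex
    have hz1 : ∃ i, z i = 0 := ⟨i1, (hPz i1).mp hwi⟩
    set N := k ^ n with hN
    have hcard : Fintype.card (Fin (N + 1)) > Fintype.card (Fin n → ZMod k) := by
      simp [ZMod.card, hN]
    obtain ⟨a, b, hab, hzab⟩ :=
      Fintype.exists_ne_map_eq_of_card_lt (fun j : Fin (N + 1) => z j) hcard
    -- wlog a < b
    obtain ⟨a, b, hab, hzab⟩ : ∃ a b : Fin (N + 1), (a : ℕ) < (b : ℕ) ∧ z a = z b := by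
      rcases lt_or_gt_of_ne hab with h | h
      · exact ⟨a, b, h, hzab⟩
      · exact ⟨b, a, h, hzab.symm⟩
    set i0 := Nat.find hz1 with hi0
    have hzi0 : z i0 = 0 := Nat.find_spec hz1
    have hi0N : i0 < N := by
      by_contra hge
      push_neg at hge
      have hbN : (b : ℕ) ≤ N := Nat.lt_succ_iff.mp b.isLt
      have hbi0 : (b : ℕ) ≤ i0 := hbN.trans hge
      set t := i0 - (b : ℕ) with ht
      have hbt : (b : ℕ) + t = i0 := by omega
      have h8 : z ((a : ℕ) + t) = z i0 := by
        rw [hzrec, hzab, ← hzrec, hbt]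
      have h9 : (a : ℕ) + t < i0 := by omega
      exact Nat.find_min hz1 h9 (h8.trans hzi0)
    have hNle : N ≤ k ^ (n ^ 2) :=
      Nat.pow_le_pow_right hk (Nat.le_self_pow two_ne_zero n)
    exact ⟨i0, lt_of_lt_of_le hi0N hNle, (hPz i0).mpr hzi0⟩
  · rintro ⟨i, _, w, hw⟩
    refine ⟨w, -(i : ℤ), ?_⟩
    rw [← hw, Matrix.mulVec_mulVec, ← zpow_natCast (Qmat A) i, ← Matrix.zpow_add hdet,
      neg_add_cancel, zpow_zero, Matrix.one_mulVec]
end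

section
/- Let λ₁, λ₂ be nonzero integers, let u, v ∈ ℤ with v ≠ 0, gcd(u,v) = 1 and v dividing λ₁ − λ₂, let M = [[1,u],[0,v]], and let A = M·diag(λ₁,λ₂)·M⁻¹ (which lies in M_2(ℤ)). Assume rad(λ₁) does not divide rad(λ₂) and rad(λ₂) does not divide rad(λ₁). Then for T ∈ M_2(ℚ): T·G_A ⊆ G_A if and only if T = M·diag(x₁,x₂)·M⁻¹ for some x₁ ∈ ℤ[1/λ₁] and x₂ ∈ ℤ[1/λ₂] such that (x₁ − x₂)/v ∈ ℛ, where ℛ = ℤ[1/(λ₁λ₂)] = ℤ[1/det A]. -/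
open Matrix Polynomial

/- ========== auxiliary lemmas ========== -/

lemma rat_mul_den (x : ℚ) : x * (x.den:ℚ) = (x.num:ℚ) := by
  have h0 : ((x.den:ℚ)) ≠ 0 := Nat.cast_ne_zero.mpr x.den_ne_zero
  calc x * (x.den:ℚ) = (x.num:ℚ)/(x.den:ℚ) * (x.den:ℚ) := by rw [Rat.num_div_den]
    _ = (x.num:ℚ) := div_mul_cancel₀ _ h0

lemma pow_dvd_bound (p : ℕ) (hp : p.Prime) (n : ℤ) (hn : n ≠ 0) (k : ℕ)
    (h : (p:ℤ)^k ∣ n) : k ≤ n.natAbs := by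
  have h' : p^k ∣ n.natAbs := by
    rw [← Int.natAbs_dvd_natAbs] at h
    simpa [Int.natAbs_pow] using h
  have h2 : p^k ≤ n.natAbs := Nat.le_of_dvd (Int.natAbs_pos.mpr hn) h'
  have h3 : k < 2^k := Nat.lt_two_pow_self
  have h4 : 2^k ≤ p^k := Nat.pow_le_pow_left hp.two_le k
  omega

lemma prime_pow_dvd_cancel (p : ℕ) (hp : p.Prime) (m z : ℤ) (hm : ¬ (p:ℤ) ∣ m)
    (K k : ℕ) (h : (p:ℤ)^k ∣ m^K * z) : (p:ℤ)^k ∣ z := by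
  have hpz : Prime (p:ℤ) := Int.prime_iff_natAbs_prime.mpr (by simpa using hp)
  have hco : IsCoprime ((p:ℤ)^k) (m^K) :=
    ((hpz.coprime_iff_not_dvd.mpr hm).pow : IsCoprime ((p:ℤ)^k) (m^K))
  exact hco.dvd_of_dvd_mul_left h

lemma exists_prime_rad (a b : ℤ) (hb : b ≠ 0)
    (h : ¬ (rad a : ℤ) ∣ (rad b : ℤ)) :
    ∃ p : ℕ, p.Prime ∧ (p:ℤ) ∣ a ∧ ¬ (p:ℤ) ∣ b := by
  by_contra hc
  push_neg at hc
  apply h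
  rw [Int.natCast_dvd_natCast]
  unfold rad
  apply Finset.prod_dvd_prod_of_subset _ _ _
  intro p hp
  rw [Nat.mem_primeFactors] at hp ⊢
  obtain ⟨hp1, hp2, _⟩ := hp
  have h2 : (p:ℤ) ∣ a := Int.natCast_dvd.mpr hp2
  have h3 := hc p hp1 h2
  exact ⟨hp1, Int.natCast_dvd.mp h3, Int.natAbs_ne_zero.mpr hb⟩

lemma dvd_pow_sub_pow' (lam1 lam2 v : ℤ) (h : v ∣ lam1 - lam2) (k : ℕ) :
    v ∣ lam1^k - lam2^k :=
  dvd_trans h (sub_dvd_pow_sub_pow lam1 lam2 k)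

lemma core (lam1 lam2 v a b c : ℤ) (hv : v ≠ 0)
    (hdvd : v ∣ lam1 - lam2) (N : ℕ)
    (hrel : a * lam2^N - b * lam1^N = v * c) :
    ∃ j : ℕ, v ∣ (lam1^j * a - lam2^j * b) := by
  set j := v.natAbs with hj
  refine ⟨j, ?_⟩
  set n := lam1^j * a - lam2^j * b with hn
  rcases eq_or_ne n 0 with h0 | hn0
  · simp [h0]
  have e1 : lam1^N * n = a*(lam1^(N+j) - lam2^(N+j)) + lam2^j*(v*c) := by
    simp only [hn]; linear_combination lam2^j * hrel
  have e2 : lam2^N * n = b*(lam1^(N+j) - lam2^(N+j)) + lam1^j*(v*c) := by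
    simp only [hn]; linear_combination lam1^j * hrel
  have h1 : v ∣ lam1^N * n := by
    rw [e1]
    exact dvd_add (Dvd.dvd.mul_left (dvd_pow_sub_pow' _ _ _ hdvd _) a)
      (Dvd.dvd.mul_left (Dvd.intro c rfl) _)
  have h2 : v ∣ lam2^N * n := by
    rw [e2]
    exact dvd_add (Dvd.dvd.mul_left (dvd_pow_sub_pow' _ _ _ hdvd _) b)
      (Dvd.dvd.mul_left (Dvd.intro c rfl) _)
  set G : ℕ := Int.gcd (lam1^N) (lam2^N) with hG
  have h3 : v ∣ (G:ℤ) * n := by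
    rw [hG, Int.gcd_eq_gcd_ab (lam1^N) (lam2^N)]
    have : (lam1 ^ N * (lam1^N).gcdA (lam2^N) + lam2 ^ N * (lam1^N).gcdB (lam2^N)) * n
        = ((lam1^N).gcdA (lam2^N)) * (lam1^N * n) + ((lam1^N).gcdB (lam2^N)) * (lam2^N * n) := by
      ring
    rw [this]
    exact dvd_add (h1.mul_left _) (h2.mul_left _)
  rw [← Int.natAbs_dvd_natAbs]
  rw [← Int.natAbs_dvd_natAbs] at h3
  rw [Int.natAbs_mul, Int.natAbs_natCast] at h3
  rw [Nat.dvd_iff_prime_pow_dvd_dvd]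
  intro p k pp hpk
  have ppn : p.Prime := pp
  rcases Nat.eq_zero_or_pos k with rfl | hk
  · simp
  by_cases hpg : p ∣ lam1.natAbs ∧ p ∣ lam2.natAbs
  · have hkj : k ≤ j := by
      have h2k : p^k ≤ v.natAbs := Nat.le_of_dvd (Int.natAbs_pos.mpr hv) hpk
      have h3' : k < 2^k := Nat.lt_two_pow_self
      have h4' : 2^k ≤ p^k := Nat.pow_le_pow_left ppn.two_le k
      omega
    have hpj : (p:ℤ)^j ∣ n := by
      have d1 : (p:ℤ) ∣ lam1 := Int.natCast_dvd.mpr hpg.1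
      have d2 : (p:ℤ) ∣ lam2 := Int.natCast_dvd.mpr hpg.2
      rw [hn]
      exact dvd_sub ((pow_dvd_pow_of_dvd d1 j).mul_right a)
        ((pow_dvd_pow_of_dvd d2 j).mul_right b)
    have : (p:ℕ)^j ∣ n.natAbs := by
      rw [← Int.natAbs_dvd_natAbs] at hpj
      simpa [Int.natAbs_pow] using hpj
    exact dvd_trans (pow_dvd_pow p hkj) this
  · have hco : Nat.Coprime (p^k) G := by
      apply Nat.Coprime.pow_left
      rw [Nat.Prime.coprime_iff_not_dvd ppn]
      intro hdG
      apply hpg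
      constructor
      · have : p ∣ (lam1^N).natAbs := hdG.trans (Nat.gcd_dvd_left _ _)
        rw [Int.natAbs_pow] at this
        exact ppn.dvd_of_dvd_pow this
      · have : p ∣ (lam2^N).natAbs := hdG.trans (Nat.gcd_dvd_right _ _)
        rw [Int.natAbs_pow] at this
        exact ppn.dvd_of_dvd_pow this
    exact hco.dvd_of_dvd_mul_left (hpk.trans h3)

noncomputable def Bm (l1 l2 u v : ℚ) (k : ℤ) : Matrix (Fin 2) (Fin 2) ℚ :=
  !![l1^k, u*(l2^k - l1^k)/v; 0, l2^k]

lemma Bm_mul (l1 l2 u v : ℚ) (h1 : l1 ≠ 0) (h2 : l2 ≠ 0) (hv : v ≠ 0) (j k : ℤ) :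
    Bm l1 l2 u v j * Bm l1 l2 u v k = Bm l1 l2 u v (j+k) := by
  ext i j'
  fin_cases i <;> fin_cases j' <;>
    simp [Bm, Matrix.mul_apply, Fin.sum_univ_two, zpow_add₀, h1, h2] <;>
    field_simp <;> ring

lemma Bm_zero (l1 l2 u v : ℚ) : Bm l1 l2 u v 0 = 1 := by
  ext i j' ; fin_cases i <;> fin_cases j' <;> simp [Bm, Matrix.one_fin_two]

lemma Bm_apply (l1 l2 u v : ℚ) (k : ℤ) (y : Fin 2 → ℚ) :
    (Bm l1 l2 u v k *ᵥ y) 0 = l1^k * y 0 + u*(l2^k - l1^k)/v * y 1 ∧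
    (Bm l1 l2 u v k *ᵥ y) 1 = l2^k * y 1 := by
  constructor <;> simp [Bm, Matrix.mulVec, dotProduct, Fin.sum_univ_two]

lemma Minv (u v : ℚ) (hv : v ≠ 0) :
    (!![(1 : ℚ), u; 0, v])⁻¹ = !![1, -u/v; 0, 1/v] := by
  apply Matrix.inv_eq_right_inv
  rw [Matrix.mul_fin_two, Matrix.one_fin_two]
  congr 1 <;> field_simp <;> simp [hv]

lemma QA_pow (lam1 lam2 u v : ℤ) (h1 : lam1 ≠ 0) (h2 : lam2 ≠ 0) (hv : v ≠ 0)
    (A : Matrix (Fin 2) (Fin 2) ℤ)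
    (hA : Qmat A =
      !![(1 : ℚ), (u : ℚ); 0, (v : ℚ)] * !![(lam1 : ℚ), 0; 0, (lam2 : ℚ)] *
        (!![(1 : ℚ), (u : ℚ); 0, (v : ℚ)])⁻¹) :
    ∀ m : ℤ, Qmat A ^ m = Bm lam1 lam2 u v m := by
  have h1' : (lam1 : ℚ) ≠ 0 := Int.cast_ne_zero.mpr h1
  have h2' : (lam2 : ℚ) ≠ 0 := Int.cast_ne_zero.mpr h2
  have hv' : (v : ℚ) ≠ 0 := Int.cast_ne_zero.mpr hv
  have hA1 : Qmat A = Bm lam1 lam2 u v 1 := by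
    rw [hA, Minv _ _ hv', Matrix.mul_fin_two, Matrix.mul_fin_two]
    ext i j' ; fin_cases i <;> fin_cases j' <;>
      · simp [Bm]
        try field_simp
        try ring
  have hpow : ∀ n : ℕ, Qmat A ^ n = Bm lam1 lam2 u v n := by
    intro n
    induction n with
    | zero => simpa using (Bm_zero (lam1:ℚ) lam2 u v).symm
    | succ n ih =>
      rw [pow_succ, ih, hA1, Bm_mul _ _ _ _ h1' h2' hv']
      norm_num
  intro m
  cases m with
  | ofNat n => simpa using hpow n
  | negSucc n =>
    have : (Int.negSucc n) = -((n+1 : ℕ) : ℤ) := by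
      simp [Int.negSucc_eq]
    rw [this, Matrix.zpow_neg_natCast, hpow]
    apply Matrix.inv_eq_right_inv
    rw [Bm_mul _ _ _ _ h1' h2' hv']
    rw [show ((n+1:ℕ):ℤ) + -((n+1:ℕ):ℤ) = 0 by ring]
    exact Bm_zero (lam1:ℚ) lam2 u v

lemma intVec (lam1 lam2 u v : ℤ) (h1 : lam1 ≠ 0) (h2 : lam2 ≠ 0) (hv : v ≠ 0)
    (hdvd : v ∣ lam1 - lam2) (j : ℕ) (c : Fin 2 → ℤ) :
    ∃ n0 n1 : ℤ,
      (Bm lam1 lam2 u v (j:ℤ) *ᵥ (fun i => ((c i : ℤ) : ℚ))) 0 = (n0:ℚ) ∧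
      (Bm lam1 lam2 u v (j:ℤ) *ᵥ (fun i => ((c i : ℤ) : ℚ))) 1 = (n1:ℚ) := by
  have hv' : (v:ℚ) ≠ 0 := Int.cast_ne_zero.mpr hv
  obtain ⟨d, hd⟩ : v ∣ lam2^j - lam1^j :=
    dvd_sub_comm.mp (dvd_trans hdvd (sub_dvd_pow_sub_pow lam1 lam2 j))
  obtain ⟨h0, h1'⟩ := Bm_apply (lam1:ℚ) lam2 u v (j:ℤ) (fun i => ((c i : ℤ) : ℚ))
  refine ⟨lam1^j * c 0 + u * d * c 1, lam2^j * c 1, ?_, ?_⟩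
  · rw [h0]
    have hdq : ((lam2:ℚ)^j - (lam1:ℚ)^j) = (v:ℚ) * (d:ℚ) := by
      have := congrArg (fun z : ℤ => (z:ℚ)) hd
      push_cast at this
      exact this
    push_cast
    rw [zpow_natCast, zpow_natCast, hdq]
    field_simp
  · rw [h1']
    push_cast
    rw [zpow_natCast]

lemma memGA_iff (lam1 lam2 u v : ℤ) (h1 : lam1 ≠ 0) (h2 : lam2 ≠ 0) (hv : v ≠ 0)
    (hdvd : v ∣ lam1 - lam2)
    (A : Matrix (Fin 2) (Fin 2) ℤ)
    (hA : ∀ m : ℤ, Qmat A ^ m = Bm lam1 lam2 u v m) (w : Fin 2 → ℚ) :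
    w ∈ GA A ↔ ∃ (k : ℕ) (n0 n1 : ℤ),
      (lam1:ℚ)^k * w 0 + (u:ℚ) * ((lam2:ℚ)^k - (lam1:ℚ)^k)/(v:ℚ) * w 1 = (n0:ℚ) ∧
      (lam2:ℚ)^k * w 1 = (n1:ℚ) := by
  have h1' : (lam1 : ℚ) ≠ 0 := Int.cast_ne_zero.mpr h1
  have h2' : (lam2 : ℚ) ≠ 0 := Int.cast_ne_zero.mpr h2
  have hv' : (v : ℚ) ≠ 0 := Int.cast_ne_zero.mpr hv
  have hBmul : ∀ j k : ℤ, Bm (lam1:ℚ) lam2 u v j * Bm (lam1:ℚ) lam2 u v k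
      = Bm lam1 lam2 u v (j+k) := Bm_mul _ _ _ _ h1' h2' hv'
  constructor
  · rintro ⟨x, m, rfl⟩
    rw [hA m]
    set k : ℕ := (-m).toNat with hk
    have hkm : (k:ℤ) + m = ((k + m).toNat : ℤ) := by
      have : m ≤ (m).toNat := Int.self_le_toNat m
      have h2 : -m ≤ (k:ℤ) := Int.self_le_toNat (-m)
      omega
    obtain ⟨n0, n1, e0, e1⟩ := intVec lam1 lam2 u v h1 h2 hv hdvd ((k:ℤ) + m).toNat x
    refine ⟨k, n0, n1, ?_, ?_⟩
    · rw [show ((lam1:ℚ)^k : ℚ) = (lam1:ℚ)^(k:ℤ) by rw [zpow_natCast],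
        show ((lam2:ℚ)^k : ℚ) = (lam2:ℚ)^(k:ℤ) by rw [zpow_natCast]]
      rw [← (Bm_apply (lam1:ℚ) lam2 u v (k:ℤ) _).1]
      rw [Matrix.mulVec_mulVec, hBmul, hkm]
      exact e0
    · rw [show ((lam2:ℚ)^k : ℚ) = (lam2:ℚ)^(k:ℤ) by rw [zpow_natCast]]
      rw [← (Bm_apply (lam1:ℚ) lam2 u v (k:ℤ) _).2]
      rw [Matrix.mulVec_mulVec, hBmul, hkm]
      exact e1
  · rintro ⟨k, n0, n1, e0, e1⟩
    refine ⟨![n0, n1], -(k:ℤ), ?_⟩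
    rw [hA]
    have c0 : (Bm (lam1:ℚ) lam2 u v (k:ℤ) *ᵥ w) 0 = ((n0:ℤ):ℚ) := by
      rw [(Bm_apply (lam1:ℚ) lam2 u v (k:ℤ) w).1]
      simpa [zpow_natCast] using e0
    have c1 : (Bm (lam1:ℚ) lam2 u v (k:ℤ) *ᵥ w) 1 = ((n1:ℤ):ℚ) := by
      rw [(Bm_apply (lam1:ℚ) lam2 u v (k:ℤ) w).2]
      simpa [zpow_natCast] using e1
    have hBw : Bm (lam1:ℚ) lam2 u v (k:ℤ) *ᵥ w = (fun i => ((![n0,n1] i : ℤ) : ℚ)) := by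
      funext i
      fin_cases i
      · simpa using c0
      · simpa using c1
    rw [← hBw, Matrix.mulVec_mulVec, hBmul]
    rw [show -(k:ℤ) + (k:ℤ) = 0 by ring, Bm_zero]
    simp

set_option maxHeartbeats 2000000 in
theorem stmt7 (lam1 lam2 u v : ℤ) (hl1 : lam1 ≠ 0) (hl2 : lam2 ≠ 0) (hv : v ≠ 0)
    (huv : Int.gcd u v = 1) (hdvd : v ∣ lam1 - lam2)
    (A : Matrix (Fin 2) (Fin 2) ℤ)
    (hA : Qmat A =
      !![(1 : ℚ), (u : ℚ); 0, (v : ℚ)] * !![(lam1 : ℚ), 0; 0, (lam2 : ℚ)] *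
        (!![(1 : ℚ), (u : ℚ); 0, (v : ℚ)])⁻¹)
    (hrad1 : ¬ (rad lam1 : ℤ) ∣ (rad lam2 : ℤ))
    (hrad2 : ¬ (rad lam2 : ℤ) ∣ (rad lam1 : ℤ))
    (T : Matrix (Fin 2) (Fin 2) ℚ) :
    (∀ w ∈ GA A, T *ᵥ w ∈ GA A) ↔
      ∃ x₁ x₂ : ℚ, x₁ ∈ Zinv lam1 ∧ x₂ ∈ Zinv lam2 ∧
        (x₁ - x₂) / (v : ℚ) ∈ Zinv (lam1 * lam2) ∧
        T = !![(1 : ℚ), (u : ℚ); 0, (v : ℚ)] * !![x₁, 0; 0, x₂] *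
              (!![(1 : ℚ), (u : ℚ); 0, (v : ℚ)])⁻¹ := by
  have hl1' : (lam1 : ℚ) ≠ 0 := Int.cast_ne_zero.mpr hl1
  have hl2' : (lam2 : ℚ) ≠ 0 := Int.cast_ne_zero.mpr hl2
  have hv' : (v : ℚ) ≠ 0 := Int.cast_ne_zero.mpr hv
  have hQA := QA_pow lam1 lam2 u v hl1 hl2 hv A hA
  have hmem := memGA_iff lam1 lam2 u v hl1 hl2 hv hdvd A hQA
  have hTform : ∀ x₁ x₂ : ℚ,
      !![(1 : ℚ), (u : ℚ); 0, (v : ℚ)] * !![x₁, 0; 0, x₂] *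
        (!![(1 : ℚ), (u : ℚ); 0, (v : ℚ)])⁻¹ = !![x₁, (u:ℚ)*(x₂-x₁)/(v:ℚ); 0, x₂] := by
    intro x₁ x₂
    rw [Minv _ _ hv', Matrix.mul_fin_two, Matrix.mul_fin_two]
    ext i j ; fin_cases i <;> fin_cases j <;>
      · simp
        try field_simp
        try ring
  constructor
  · intro hT
    obtain ⟨p, pp, hp1, hp2⟩ := exists_prime_rad lam1 lam2 hl2 hrad1
    obtain ⟨q, qp, hq2, hq1⟩ := exists_prime_rad lam2 lam1 hl1 hrad2
    have hTv0 : ∀ y0 y1 : ℚ, (T *ᵥ ![y0,y1]) 0 = T 0 0 * y0 + T 0 1 * y1 := by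
      intro y0 y1; simp [Matrix.mulVec, dotProduct, Fin.sum_univ_two]
    have hTv1 : ∀ y0 y1 : ℚ, (T *ᵥ ![y0,y1]) 1 = T 1 0 * y0 + T 1 1 * y1 := by
      intro y0 y1; simp [Matrix.mulVec, dotProduct, Fin.sum_univ_two]
    have hwk1 : ∀ k : ℕ, (![1/(lam1:ℚ)^k, 0] : Fin 2 → ℚ) ∈ GA A := by
      intro k
      rw [hmem]
      refine ⟨k, 1, 0, ?_, ?_⟩ <;> simp <;> field_simp
    have hwk2 : ∀ k : ℕ, (![(u:ℚ)/(lam2:ℚ)^k, (v:ℚ)/(lam2:ℚ)^k] : Fin 2 → ℚ) ∈ GA A := by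
      intro k
      rw [hmem]
      refine ⟨k, u, v, ?_, ?_⟩
      · simp only [Matrix.cons_val_zero, Matrix.cons_val_one, Matrix.head_cons]
        field_simp
        ring
      · simp only [Matrix.cons_val_one, Matrix.head_cons, Matrix.cons_val_zero]
        field_simp
    -- Step 1 : T 1 0 = 0
    have hT10 : T 1 0 = 0 := by
      by_contra h10
      have hnum : (T 1 0).num ≠ 0 := Rat.num_ne_zero.mpr h10
      set k := (T 1 0).num.natAbs + 1 with hk
      obtain ⟨K, n0, n1, e0, e1⟩ := (hmem _).mp (hT _ (hwk1 k))
      rw [hTv1] at e1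
      have e1' : (lam2:ℚ)^K * (T 1 0) = (n1:ℚ) * (lam1:ℚ)^k := by
        field_simp at e1
        linear_combination e1
      have hnd : (T 1 0) * ((T 1 0).den:ℚ) = ((T 1 0).num:ℚ) := rat_mul_den _
      have e2 : (lam2:ℚ)^K * ((T 1 0).num:ℚ) = (n1:ℚ) * (lam1:ℚ)^k * ((T 1 0).den:ℚ) := by
        linear_combination ((T 1 0).den : ℚ) * e1' - (lam2:ℚ)^K * hnd
      have eZ : lam2^K * (T 1 0).num = n1 * lam1^k * ((T 1 0).den:ℤ) := by
        exact_mod_cast e2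
      have hdvd1 : (p:ℤ)^k ∣ lam2^K * (T 1 0).num := by
        rw [eZ]
        exact ((pow_dvd_pow_of_dvd hp1 k).mul_left n1).mul_right _
      have hdvd2 : (p:ℤ)^k ∣ (T 1 0).num :=
        prime_pow_dvd_cancel p pp lam2 _ hp2 K k hdvd1
      have := pow_dvd_bound p pp _ hnum k hdvd2
      omega
    -- Step 2 : σ = u*T00 + v*T01 - u*T11 = 0
    set σ : ℚ := (u:ℚ) * T 0 0 + (v:ℚ) * T 0 1 - (u:ℚ) * T 1 1 with hσdef
    set E : ℤ := (σ.den : ℤ) * ((T 1 1).den : ℤ) with hE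
    have hEpos : 0 < E := by
      rw [hE]
      have h1 := σ.pos
      have h2 := (T 1 1).pos
      positivity
    have hE0 : E ≠ 0 := ne_of_gt hEpos
    have hE0' : (E:ℚ) ≠ 0 := Int.cast_ne_zero.mpr hE0
    set s' : ℤ := σ.num * ((T 1 1).den : ℤ) with hs'
    set t' : ℤ := u * (T 1 1).num * (σ.den : ℤ) with ht'
    set r' : ℤ := v * (T 1 1).num * (σ.den : ℤ) with hr'
    have hndσ : σ * (σ.den:ℚ) = (σ.num:ℚ) := rat_mul_den _
    have hndT : (T 1 1) * (((T 1 1).den : ℕ):ℚ) = ((T 1 1).num:ℚ) := rat_mul_den _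
    have hsq : (E:ℚ) * σ = (s':ℚ) := by
      rw [hE, hs']
      push_cast
      linear_combination (((T 1 1).den : ℕ):ℚ) * hndσ
    have htq : (E:ℚ) * ((u:ℚ) * T 1 1) = (t':ℚ) := by
      rw [hE, ht']
      push_cast
      linear_combination ((u:ℚ) * ((σ.den:ℕ):ℚ)) * hndT
    have hrq : (E:ℚ) * ((v:ℚ) * T 1 1) = (r':ℚ) := by
      rw [hE, hr']
      push_cast
      linear_combination ((v:ℚ) * ((σ.den:ℕ):ℚ)) * hndT
    have hσ : σ = 0 := by
      by_contra hσ0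
      have hs'0 : s' ≠ 0 := by
        intro h0
        apply hσ0
        have h : (E:ℚ) * σ = 0 := by rw [hsq, h0]; simp
        rcases mul_eq_zero.mp h with h | h
        · exact absurd h hE0'
        · exact h
      obtain ⟨k, hkdef⟩ : ∃ k : ℕ, k = s'.natAbs + r'.natAbs + 2 := ⟨_, rfl⟩
      obtain ⟨K, n0, n1, e0, e1⟩ := (hmem _).mp (hT _ (hwk2 k))
      rw [hTv0, hTv1] at e0
      rw [hTv1] at e1
      rw [hT10] at e0 e1
      simp only [zero_mul, zero_add] at e0 e1
      rw [show T 0 0 * ((u:ℚ)/(lam2:ℚ)^k) + T 0 1 * ((v:ℚ)/(lam2:ℚ)^k)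
          = ((u:ℚ)*T 0 0 + (v:ℚ)*T 0 1)/(lam2:ℚ)^k from by ring] at e0
      rw [show T 1 1 * ((v:ℚ)/(lam2:ℚ)^k) = ((v:ℚ)*T 1 1)/(lam2:ℚ)^k from by ring] at e0 e1
      have e0' : (lam1:ℚ)^K * (s':ℚ) + (lam2:ℚ)^K * (t':ℚ)
          = (lam2:ℚ)^k * ((E:ℚ) * (n0:ℚ)) := by
        rw [← hsq, ← htq, hσdef]
        field_simp at e0
        apply mul_left_cancel₀ (mul_ne_zero hv' (pow_ne_zero k hl2'))
        linear_combination (v:ℚ) * (lam2:ℚ)^k * (E:ℚ) * e0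
      have e1' : (lam2:ℚ)^K * (r':ℚ) = (lam2:ℚ)^k * ((E:ℚ) * (n1:ℚ)) := by
        rw [← hrq]
        field_simp at e1
        linear_combination (E:ℚ) * e1
      have eZ0 : lam1^K * s' + lam2^K * t' = lam2^k * (E * n0) := by exact_mod_cast e0'
      have eZ1 : lam2^K * r' = lam2^k * (E * n1) := by exact_mod_cast e1'
      have hqk : (q:ℤ)^k ∣ lam1^K * s' + lam2^K * t' := by
        rw [eZ0]
        exact ((pow_dvd_pow_of_dvd hq2 k).mul_right _)
      by_cases hKk : k ≤ K
      · have h1 : (q:ℤ)^k ∣ lam2^K * t' :=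
          dvd_mul_of_dvd_left ((pow_dvd_pow_of_dvd hq2 k).trans (pow_dvd_pow _ hKk)) _
        have h2 : (q:ℤ)^k ∣ lam1^K * s' := by
          have h := dvd_sub hqk h1
          simpa using h
        have h3 : (q:ℤ)^k ∣ s' := prime_pow_dvd_cancel q qp lam1 _ hq1 K k h2
        have := pow_dvd_bound q qp _ hs'0 k h3
        omega
      · push_neg at hKk
        have hsplit : r' = lam2^(k-K) * (E * n1) := by
          have hcan : lam2^K * r' = lam2^K * (lam2^(k-K) * (E * n1)) := by
            conv_rhs => rw [← mul_assoc, ← pow_add, show K + (k-K) = k from by omega]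
            exact eZ1
          exact mul_left_cancel₀ (pow_ne_zero K hl2) hcan
        rcases eq_or_ne r' 0 with hr0 | hr0
        · have hT11 : T 1 1 = 0 := by
            have h : (E:ℚ) * ((v:ℚ) * T 1 1) = 0 := by rw [hrq, hr0]; simp
            rcases mul_eq_zero.mp h with h | h
            · exact absurd h hE0'
            rcases mul_eq_zero.mp h with h | h
            · exact absurd h hv'
            · exact h
          have ht'0 : t' = 0 := by
            have h : (t':ℚ) = 0 := by rw [← htq, hT11]; ring
            exact_mod_cast h
          have h2 : (q:ℤ)^k ∣ lam1^K * s' := by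
            have h := hqk
            rw [ht'0] at h
            simpa using h
          have h3 : (q:ℤ)^k ∣ s' := prime_pow_dvd_cancel q qp lam1 _ hq1 K k h2
          have := pow_dvd_bound q qp _ hs'0 k h3
          omega
        · have hdr : (q:ℤ)^(k-K) ∣ r' := by
            rw [hsplit]
            exact ((pow_dvd_pow_of_dvd hq2 (k-K)).mul_right _)
          have hb1 : k - K ≤ r'.natAbs := pow_dvd_bound q qp _ hr0 _ hdr
          have h1 : (q:ℤ)^K ∣ lam2^K * t' :=
            dvd_mul_of_dvd_left (pow_dvd_pow_of_dvd hq2 K) _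
          have h0 : (q:ℤ)^K ∣ lam1^K * s' + lam2^K * t' := by
            rw [eZ0]
            exact dvd_mul_of_dvd_left ((pow_dvd_pow_of_dvd hq2 K).trans
              (pow_dvd_pow _ (le_of_lt hKk))) _
          have h2 : (q:ℤ)^K ∣ lam1^K * s' := by
            have h := dvd_sub h0 h1
            simpa using h
          have h3 : (q:ℤ)^K ∣ s' := prime_pow_dvd_cancel q qp lam1 _ hq1 K K h2
          have := pow_dvd_bound q qp _ hs'0 K h3
          omega
    -- Step 3 : T 0 1
    have hT01 : T 0 1 = (u:ℚ) * (T 1 1 - T 0 0)/(v:ℚ) := by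
      rw [eq_div_iff hv']
      linear_combination hσ
    -- Step 4 : T 0 0 ∈ Zinv lam1
    obtain ⟨K1, a1, b1, ea0, ea1⟩ := (hmem _).mp (hT _ (hwk1 0))
    rw [hTv0, hTv1] at ea0
    rw [hT10] at ea0
    simp only [pow_zero, div_one, mul_zero, mul_one, zero_mul, add_zero, zero_add,
      mul_zero, sub_self, zero_div] at ea0
    have hx1Z : T 0 0 = (a1:ℚ)/(lam1:ℚ)^K1 := by
      rw [eq_div_iff (pow_ne_zero _ hl1')]
      linear_combination ea0
    -- Step 5 : T 1 1 ∈ Zinv lam2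
    obtain ⟨K2, a2, b2, eb0, eb1⟩ := (hmem _).mp (hT _ (hwk2 0))
    rw [hTv0, hTv1] at eb0
    rw [hTv1] at eb1
    rw [hT10] at eb0 eb1
    simp only [pow_zero, div_one, mul_zero, mul_one, zero_mul, add_zero, zero_add] at eb0 eb1
    obtain ⟨α, β, hαβ⟩ : ∃ α β : ℤ, u * α + v * β = 1 := by
      refine ⟨Int.gcdA u v, Int.gcdB u v, ?_⟩
      have h := Int.gcd_eq_gcd_ab u v
      rw [huv] at h
      exact_mod_cast h.symm
    have hαβq : (u:ℚ) * (α:ℚ) + (v:ℚ) * (β:ℚ) = 1 := by exact_mod_cast hαβ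
    have hu2 : (u:ℚ) * ((lam2:ℚ)^K2 * T 1 1) = (a2:ℚ) := by
      rw [hT01] at eb0
      field_simp at eb0
      apply mul_right_cancel₀ hv'
      linear_combination (v:ℚ) * eb0
    have hv2 : (v:ℚ) * ((lam2:ℚ)^K2 * T 1 1) = (b2:ℚ) := by
      linear_combination eb1
    have hx2K : (lam2:ℚ)^K2 * T 1 1 = (α:ℚ)*(a2:ℚ) + (β:ℚ)*(b2:ℚ) := by
      linear_combination (α:ℚ) * hu2 + (β:ℚ) * hv2 - ((lam2:ℚ)^K2 * T 1 1) * hαβq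
    have hx2Z : T 1 1 = ((α*a2 + β*b2 : ℤ):ℚ)/(lam2:ℚ)^K2 := by
      rw [eq_div_iff (pow_ne_zero _ hl2')]
      push_cast
      linear_combination hx2K
    -- Step 6 : (T00 - T11)/v ∈ Zinv (lam1*lam2)
    have hLLq : (((lam1*lam2 : ℤ)):ℚ) ≠ 0 := by
      push_cast
      exact mul_ne_zero hl1' hl2'
    have hZadd : ∀ y z : ℚ, y ∈ Zinv (lam1*lam2) → z ∈ Zinv (lam1*lam2)
        → y + z ∈ Zinv (lam1*lam2) := by
      rintro y z ⟨ay, my, hy⟩ ⟨az, mz, hz⟩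
      refine ⟨ay * (lam1*lam2)^mz + az * (lam1*lam2)^my, my + mz, ?_⟩
      rw [hy, hz]
      rw [div_add_div _ _ (pow_ne_zero _ hLLq) (pow_ne_zero _ hLLq), div_eq_div_iff
        (mul_ne_zero (pow_ne_zero _ hLLq) (pow_ne_zero _ hLLq)) (pow_ne_zero _ hLLq)]
      push_cast
      ring
    have hZmul : ∀ y z : ℚ, y ∈ Zinv (lam1*lam2) → z ∈ Zinv (lam1*lam2)
        → y * z ∈ Zinv (lam1*lam2) := by
      rintro y z ⟨ay, my, hy⟩ ⟨az, mz, hz⟩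
      refine ⟨ay * az, my + mz, ?_⟩
      rw [hy, hz]
      rw [div_mul_div_comm, div_eq_div_iff
        (mul_ne_zero (pow_ne_zero _ hLLq) (pow_ne_zero _ hLLq)) (pow_ne_zero _ hLLq)]
      push_cast
      ring
    have hZint : ∀ n : ℤ, (n:ℚ) ∈ Zinv (lam1*lam2) := fun n => ⟨n, 0, by simp⟩
    have hZinv1 : ∀ n : ℕ, (1/(lam1:ℚ)^n) ∈ Zinv (lam1*lam2) := by
      intro n
      refine ⟨lam2^n, n, ?_⟩
      rw [div_eq_div_iff (pow_ne_zero _ hl1') (pow_ne_zero _ hLLq)]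
      push_cast
      ring
    have hZinv2 : ∀ n : ℕ, (1/(lam2:ℚ)^n) ∈ Zinv (lam1*lam2) := by
      intro n
      refine ⟨lam1^n, n, ?_⟩
      rw [div_eq_div_iff (pow_ne_zero _ hl2') (pow_ne_zero _ hLLq)]
      push_cast
      ring
    have he2 : (![(0:ℚ), 1] : Fin 2 → ℚ) ∈ GA A := by
      rw [hmem]
      exact ⟨0, 0, 1, by simp, by simp⟩
    obtain ⟨K3, c0, c1, ec0, ec1⟩ := (hmem _).mp (hT _ he2)
    rw [hTv0, hTv1] at ec0
    rw [hT10] at ec0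
    simp only [mul_zero, mul_one, zero_add, zero_mul] at ec0
    rw [hT01] at ec0
    have hqu : (u:ℚ) * (((lam1:ℚ)^K3 * T 0 0 - (lam2:ℚ)^K3 * T 1 1)/(v:ℚ))
        = ((-c0 : ℤ):ℚ) := by
      push_cast
      linear_combination -ec0
    obtain ⟨d3, hd3⟩ : v ∣ lam1^K3 - lam2^K3 := dvd_pow_sub_pow' lam1 lam2 v hdvd K3
    have hd3q : ((lam1:ℚ)^K3 - (lam2:ℚ)^K3) = (v:ℚ) * (d3:ℚ) := by
      exact_mod_cast congrArg (fun z : ℤ => (z:ℚ)) hd3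
    have hterm1 : (lam1:ℚ)^K3 * T 0 0 ∈ Zinv (lam1*lam2) := by
      rw [hx1Z, show (lam1:ℚ)^K3 * ((a1:ℚ)/(lam1:ℚ)^K1)
          = ((lam1^K3 * a1 : ℤ):ℚ) * (1/(lam1:ℚ)^K1) by push_cast; ring]
      exact hZmul _ _ (hZint _) (hZinv1 _)
    have hterm2 : -((lam2:ℚ)^K3 * T 1 1) ∈ Zinv (lam1*lam2) := by
      rw [hx2Z, show -((lam2:ℚ)^K3 * (((α*a2 + β*b2 : ℤ):ℚ)/(lam2:ℚ)^K2))
          = ((-(lam2^K3 * (α*a2 + β*b2)) : ℤ):ℚ) * (1/(lam2:ℚ)^K2) by push_cast; ring]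
      exact hZmul _ _ (hZint _) (hZinv2 _)
    have hqvZ : (lam1:ℚ)^K3 * T 0 0 - (lam2:ℚ)^K3 * T 1 1 ∈ Zinv (lam1*lam2) := by
      rw [show (lam1:ℚ)^K3 * T 0 0 - (lam2:ℚ)^K3 * T 1 1
          = (lam1:ℚ)^K3 * T 0 0 + -((lam2:ℚ)^K3 * T 1 1) by ring]
      exact hZadd _ _ hterm1 hterm2
    have hqqZ : ((lam1:ℚ)^K3 * T 0 0 - (lam2:ℚ)^K3 * T 1 1)/(v:ℚ) ∈ Zinv (lam1*lam2) := by
      set qq : ℚ := ((lam1:ℚ)^K3 * T 0 0 - (lam2:ℚ)^K3 * T 1 1)/(v:ℚ) with hqqdef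
      have hqv : (v:ℚ) * qq = (lam1:ℚ)^K3 * T 0 0 - (lam2:ℚ)^K3 * T 1 1 := by
        rw [hqqdef]
        field_simp
      have hsplit : qq = (α:ℚ) * ((u:ℚ) * qq) + (β:ℚ) * ((v:ℚ) * qq) := by
        linear_combination (-qq) * hαβq
      rw [hsplit, hqu, hqv]
      exact hZadd _ _ (hZmul _ _ (hZint α) (hZint _)) (hZmul _ _ (hZint β) hqvZ)
    have hsfinal : (T 0 0 - T 1 1)/(v:ℚ)
        = (((lam1:ℚ)^K3 * T 0 0 - (lam2:ℚ)^K3 * T 1 1)/(v:ℚ)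
            + ((-d3 : ℤ):ℚ) * T 1 1) * (1/(lam1:ℚ)^K3) := by
      have hd3q' : (d3:ℚ) = ((lam1:ℚ)^K3 - (lam2:ℚ)^K3)/(v:ℚ) := by
        rw [eq_div_iff hv']
        linear_combination -hd3q
      push_cast
      rw [hd3q']
      field_simp
      ring
    refine ⟨T 0 0, T 1 1, ⟨a1, K1, hx1Z⟩, ⟨α*a2 + β*b2, K2, hx2Z⟩, ?_, ?_⟩
    · rw [hsfinal]
      exact hZmul _ _ (hZadd _ _ hqqZ (hZmul _ _ (hZint _) (by
        rw [hx2Z]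
        rw [show ((α*a2 + β*b2 : ℤ):ℚ)/(lam2:ℚ)^K2
            = ((α*a2 + β*b2 : ℤ):ℚ) * (1/(lam2:ℚ)^K2) by ring]
        exact hZmul _ _ (hZint _) (hZinv2 _)))) (hZinv1 _)
    · rw [hTform]
      ext i j'
      fin_cases i <;> fin_cases j'
      · simp
      · simpa using hT01
      · simpa using hT10
      · simp

  · rintro ⟨x₁, x₂, ⟨a, m1, hx1⟩, ⟨b, m2, hx2⟩, ⟨c, r, hs⟩, hT⟩
    rw [hTform] at hT
    intro w hw
    set N := max (max m1 m2) r with hN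
    have hm1N : m1 ≤ N := le_trans (le_max_left _ _) (le_max_left _ _)
    have hm2N : m2 ≤ N := le_trans (le_max_right _ _) (le_max_left _ _)
    have hrN : r ≤ N := le_max_right _ _
    set A' : ℤ := a * lam1^(N - m1) with hA'
    set B' : ℤ := b * lam2^(N - m2) with hB'
    set C' : ℤ := c * (lam1*lam2)^(N - r) with hC'
    have hx1q : x₁ = (A':ℚ) / (lam1:ℚ)^N := by
      rw [hx1, hA']
      push_cast
      rw [show (lam1:ℚ)^N = (lam1:ℚ)^m1 * (lam1:ℚ)^(N-m1) by
        rw [← pow_add]; congr 1; omega]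
      field_simp
    have hx2q : x₂ = (B':ℚ) / (lam2:ℚ)^N := by
      rw [hx2, hB']
      push_cast
      rw [show (lam2:ℚ)^N = (lam2:ℚ)^m2 * (lam2:ℚ)^(N-m2) by
        rw [← pow_add]; congr 1; omega]
      field_simp
    have hsq : (x₁ - x₂)/(v:ℚ) = (C':ℚ) / ((lam1:ℚ)*(lam2:ℚ))^N := by
      rw [hs, hC']
      push_cast
      rw [show ((lam1:ℚ)*(lam2:ℚ))^N = ((lam1:ℚ)*(lam2:ℚ))^r * ((lam1:ℚ)*(lam2:ℚ))^(N-r) by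
        rw [← pow_add]; congr 1; omega]
      rw [div_mul_eq_div_div]
      field_simp
    have hrelq : (A':ℚ) * (lam2:ℚ)^N - (B':ℚ)*(lam1:ℚ)^N = (v:ℚ)*(C':ℚ) := by
      have e1 : (A':ℚ) = x₁ * (lam1:ℚ)^N := by
        rw [hx1q]; field_simp
      have e2 : (B':ℚ) = x₂ * (lam2:ℚ)^N := by
        rw [hx2q]; field_simp
      have e3 : (C':ℚ) = ((x₁ - x₂)/(v:ℚ)) * ((lam1:ℚ)*(lam2:ℚ))^N := by
        rw [hsq]; field_simp
      rw [e1, e2, e3]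
      field_simp
      ring
    have hrel : A' * lam2^N - B' * lam1^N = v * C' := by exact_mod_cast hrelq
    obtain ⟨j, c₂, hc₂⟩ := core lam1 lam2 v A' B' C' hv hdvd N hrel
    rw [hmem] at hw
    obtain ⟨k, n0, n1, e0, e1⟩ := hw
    rw [hmem]
    have ht0 : (T *ᵥ w) 0 = x₁ * w 0 + (u:ℚ)*(x₂-x₁)/(v:ℚ) * w 1 := by
      rw [hT]; simp [Matrix.mulVec, dotProduct, Fin.sum_univ_two]
    have ht1 : (T *ᵥ w) 1 = x₂ * w 1 := by
      rw [hT]; simp [Matrix.mulVec, dotProduct, Fin.sum_univ_two]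
    have hw1 : w 1 = (n1:ℚ) / (lam2:ℚ)^k := by
      rw [eq_div_iff (pow_ne_zero _ hl2')]
      linear_combination e1
    have hw0 : w 0 = ((n0:ℚ) - (u:ℚ)*((lam2:ℚ)^k - (lam1:ℚ)^k)/(v:ℚ)
        * ((n1:ℚ)/(lam2:ℚ)^k)) / (lam1:ℚ)^k := by
      rw [eq_div_iff (pow_ne_zero _ hl1'), ← hw1]
      linear_combination e0
    have hc₂q : (c₂:ℚ) = ((lam1:ℚ)^j*(A':ℚ) - (lam2:ℚ)^j*(B':ℚ))/(v:ℚ) := by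
      rw [eq_div_iff hv']
      have := congrArg (fun z : ℤ => (z:ℚ)) hc₂
      push_cast at this
      linear_combination -this
    refine ⟨N + j + k, lam1^j*A'*n0 - u*c₂*n1, lam2^j*B'*n1, ?_, ?_⟩
    · rw [ht0, ht1, hx1q, hx2q, hw0, hw1]
      push_cast
      rw [hc₂q]
      field_simp
      ring
    · rw [ht1, hx2q, hw1]
      push_cast
      field_simp
      ring
end

section
/- Let λ₁, λ₂ be nonzero integers, let u, v ∈ ℤ with v ≠ 0, gcd(u,v) = 1 and v dividing λ₁ − λ₂, let M = [[1,u],[0,v]], and let A = M·diag(λ₁,λ₂)·M⁻¹ (which lies in M_2(ℤ)). Assume rad(λ₁) does not divide rad(λ₂) and rad(λ₂) does not divide rad(λ₁). Then for T ∈ M_2(ℚ): T is invertible with T·G_A = G_A if and only if T = M·diag(x₁,x₂)·M⁻¹ where, for i = 1,2, x_i is a unit of the ring ℤ[1/λ_i] (equivalently x_i = ε_i ∏ p^{k_p} with ε_i ∈ {1,−1}, the product over the primes p dividing λ_i, k_p ∈ ℤ), and (x₁ − x₂)/v ∈ ℛ, where ℛ = ℤ[1/(λ₁λ₂)] = ℤ[1/det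 A]. -/
open Matrix Polynomial

/-- `x` is a unit of the subring `ℤ[1/d]` of `ℚ`. -/
def ZinvUnit (d : ℤ) (x : ℚ) : Prop := x ≠ 0 ∧ x ∈ Zinv d ∧ x⁻¹ ∈ Zinv d

/-! ### Integrality helpers -/

def IsIntQ (q : ℚ) : Prop := ∃ z : ℤ, q = (z : ℚ)

lemma isIntQ_intCast (z : ℤ) : IsIntQ (z : ℚ) := ⟨z, rfl⟩

lemma IsIntQ.add {a b : ℚ} (ha : IsIntQ a) (hb : IsIntQ b) : IsIntQ (a + b) := by
  obtain ⟨x, rfl⟩ := ha; obtain ⟨y, rfl⟩ := hb; exact ⟨x + y, by push_cast; ring⟩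

lemma IsIntQ.mul {a b : ℚ} (ha : IsIntQ a) (hb : IsIntQ b) : IsIntQ (a * b) := by
  obtain ⟨x, rfl⟩ := ha; obtain ⟨y, rfl⟩ := hb; exact ⟨x * y, by push_cast; ring⟩

lemma IsIntQ.neg {a : ℚ} (ha : IsIntQ a) : IsIntQ (-a) := by
  obtain ⟨x, rfl⟩ := ha; exact ⟨-x, by push_cast; ring⟩

lemma IsIntQ.sub {a b : ℚ} (ha : IsIntQ a) (hb : IsIntQ b) : IsIntQ (a - b) := by
  obtain ⟨x, rfl⟩ := ha; obtain ⟨y, rfl⟩ := hb; exact ⟨x - y, by push_cast; ring⟩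

lemma mem_Zinv_iff {d : ℤ} (hd : d ≠ 0) {q : ℚ} :
    q ∈ Zinv d ↔ ∃ m : ℕ, IsIntQ (q * (d : ℚ) ^ m) := by
  have hd' : (d : ℚ) ≠ 0 := Int.cast_ne_zero.mpr hd
  constructor
  · rintro ⟨a, m, rfl⟩
    exact ⟨m, ⟨a, by field_simp⟩⟩
  · rintro ⟨m, z, hz⟩
    refine ⟨z, m, ?_⟩
    have hpow : (d : ℚ) ^ m ≠ 0 := pow_ne_zero _ hd'
    field_simp at hz ⊢
    linear_combination hz

lemma IsIntQ.pow_mul_le {d : ℤ} {q : ℚ} {m : ℕ} (h : IsIntQ (q * (d:ℚ)^m)) (j : ℕ) :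
    IsIntQ (q * (d : ℚ) ^ (m + j)) := by
  have := h.mul (isIntQ_intCast (d ^ j))
  push_cast at this ⊢
  rw [pow_add]
  convert this using 1; ring

lemma Zinv.of_isIntQ {d : ℤ} (hd : d ≠ 0) {q : ℚ} (h : IsIntQ q) : q ∈ Zinv d := by
  rw [mem_Zinv_iff hd]; exact ⟨0, by simpa using h⟩

lemma Zinv.add {d : ℤ} (hd : d ≠ 0) {a b : ℚ} (ha : a ∈ Zinv d) (hb : b ∈ Zinv d) :
    a + b ∈ Zinv d := by
  rw [mem_Zinv_iff hd] at ha hb ⊢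
  obtain ⟨m, hm⟩ := ha; obtain ⟨l, hl⟩ := hb
  refine ⟨m + l, ?_⟩
  have h1 := hm.pow_mul_le l
  have h2 := hl.pow_mul_le m
  rw [add_comm l m] at h2
  have := h1.add h2
  convert this using 1; ring

lemma Zinv.neg {d : ℤ} (hd : d ≠ 0) {a : ℚ} (ha : a ∈ Zinv d) : -a ∈ Zinv d := by
  rw [mem_Zinv_iff hd] at ha ⊢
  obtain ⟨m, hm⟩ := ha
  exact ⟨m, by rw [neg_mul]; exact hm.neg⟩

lemma Zinv.sub {d : ℤ} (hd : d ≠ 0) {a b : ℚ} (ha : a ∈ Zinv d) (hb : b ∈ Zinv d) :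
    a - b ∈ Zinv d := by
  rw [sub_eq_add_neg]; exact Zinv.add hd ha (Zinv.neg hd hb)

lemma Zinv.mul {d : ℤ} (hd : d ≠ 0) {a b : ℚ} (ha : a ∈ Zinv d) (hb : b ∈ Zinv d) :
    a * b ∈ Zinv d := by
  rw [mem_Zinv_iff hd] at ha hb ⊢
  obtain ⟨m, hm⟩ := ha; obtain ⟨l, hl⟩ := hb
  refine ⟨m + l, ?_⟩
  have := hm.mul hl
  rw [pow_add]
  convert this using 1; ring

lemma Zinv.intMul {d : ℤ} (hd : d ≠ 0) (z : ℤ) {a : ℚ} (ha : a ∈ Zinv d) :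
    (z : ℚ) * a ∈ Zinv d :=
  Zinv.mul hd (Zinv.of_isIntQ hd (isIntQ_intCast z)) ha

lemma Zinv_left_subset {d e : ℤ} (hd : d ≠ 0) (he : e ≠ 0) {q : ℚ} (h : q ∈ Zinv d) :
    q ∈ Zinv (d * e) := by
  rw [mem_Zinv_iff hd] at h
  rw [mem_Zinv_iff (mul_ne_zero hd he)]
  obtain ⟨m, hm⟩ := h
  refine ⟨m, ?_⟩
  have := hm.mul (isIntQ_intCast (e ^ m))
  push_cast at this ⊢
  rw [mul_pow]
  convert this using 1; ring

lemma Zinv_right_subset {d e : ℤ} (hd : d ≠ 0) (he : e ≠ 0) {q : ℚ} (h : q ∈ Zinv e) :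
    q ∈ Zinv (d * e) := by
  rw [mul_comm]; exact Zinv_left_subset he hd h

lemma Zinv.div_pow_right {d e : ℤ} (hd : d ≠ 0) (he : e ≠ 0) {q : ℚ} (h : q ∈ Zinv (d * e))
    (k : ℕ) : q / (e : ℚ) ^ k ∈ Zinv (d * e) := by
  have hde : d * e ≠ 0 := mul_ne_zero hd he
  have he' : (e : ℚ) ≠ 0 := Int.cast_ne_zero.mpr he
  rw [mem_Zinv_iff hde] at h ⊢
  obtain ⟨m, hm⟩ := h
  refine ⟨m + k, ?_⟩
  have := hm.mul (isIntQ_intCast (d ^ k))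
  push_cast at this ⊢
  have : IsIntQ (q * (↑d * ↑e) ^ m * (d:ℚ) ^ k) := this
  convert this using 1
  rw [pow_add]
  field_simp
  ring

lemma no_inf_div {p : ℕ} (hp : p.Prime) {lam : ℤ} (hlam : lam ≠ 0)
    (hplam : ¬ (p : ℤ) ∣ lam) (x : ℚ)
    (h : ∀ n : ℕ, ∃ k : ℕ, IsIntQ ((lam : ℚ) ^ k * x / (p : ℚ) ^ n)) : x = 0 := by
  by_contra hx
  set n := x.num.natAbs with hn
  obtain ⟨k, d, hd⟩ := h n
  have hp0 : (p : ℚ) ^ n ≠ 0 := pow_ne_zero _ (Nat.cast_ne_zero.mpr hp.pos.ne')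
  have h1 : (lam : ℚ) ^ k * x = (d : ℚ) * (p : ℚ) ^ n := by
    field_simp at hd; linear_combination hd
  have hxd : (x.den : ℚ) ≠ 0 := Nat.cast_ne_zero.mpr x.den_nz
  have hxnum : (x.num : ℚ) = x * x.den := ((div_eq_iff hxd).mp (Rat.num_div_den x))
  have h2 : ((lam ^ k * x.num : ℤ) : ℚ) = ((d * (p : ℤ) ^ n * x.den : ℤ) : ℚ) := by
    push_cast
    rw [hxnum]
    linear_combination (x.den : ℚ) * h1
  have h3 : lam ^ k * x.num = d * (p : ℤ) ^ n * x.den := Int.cast_injective h2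
  have hdvd : ((p : ℤ)) ^ n ∣ x.num * lam ^ k := ⟨d * x.den, by linarith [h3]⟩
  have hcop1 : IsCoprime ((p : ℤ)) lam := by
    rw [Int.isCoprime_iff_gcd_eq_one]
    have : ¬ p ∣ lam.natAbs := by
      intro hc; exact hplam (Int.natCast_dvd.mpr hc)
    exact (Nat.Prime.coprime_iff_not_dvd hp).mpr this
  have hcop : IsCoprime ((p : ℤ) ^ n) (lam ^ k) := (hcop1.pow : _)
  have hdvd2 : ((p : ℤ)) ^ n ∣ x.num := hcop.dvd_of_dvd_mul_right hdvd
  have hnum0 : x.num ≠ 0 := Rat.num_ne_zero.mpr hx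
  have hdvd3 : p ^ n ∣ x.num.natAbs := by
    rw [← Nat.cast_pow] at hdvd2
    exact Int.natCast_dvd.mp hdvd2
  have hle : p ^ n ≤ x.num.natAbs := Nat.le_of_dvd (Int.natAbs_pos.mpr hnum0) hdvd3
  have hlt : x.num.natAbs < 2 ^ n := by rw [hn]; exact Nat.lt_two_pow_self
  have : (2:ℕ) ^ n ≤ p ^ n := Nat.pow_le_pow_left hp.two_le n
  omega

/-- From `¬ rad lam1 ∣ rad lam2`, get a prime dividing `lam1` but not `lam2` (and not `v`,
given `v ∣ lam1 - lam2`). -/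
lemma exists_prime_dvd (lam1 lam2 v : ℤ) (hl1 : lam1 ≠ 0) (hl2 : lam2 ≠ 0)
    (hdvd : v ∣ lam1 - lam2)
    (hrad : ¬ (rad lam1 : ℤ) ∣ (rad lam2 : ℤ)) :
    ∃ p : ℕ, p.Prime ∧ (p : ℤ) ∣ lam1 ∧ ¬ (p : ℤ) ∣ lam2 ∧ ¬ (p : ℤ) ∣ v := by
  have hsub : ¬ lam1.natAbs.primeFactors ⊆ lam2.natAbs.primeFactors := by
    intro hs
    apply hrad
    have : rad lam1 ∣ rad lam2 := Finset.prod_dvd_prod_of_subset _ _ _ hs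
    exact_mod_cast Int.natCast_dvd_natCast.mpr this
  obtain ⟨p, hp1, hp2⟩ := Finset.not_subset.mp hsub
  have hpp : p.Prime := Nat.prime_of_mem_primeFactors hp1
  have hd1 : (p : ℤ) ∣ lam1 := by
    have := Nat.dvd_of_mem_primeFactors hp1
    exact Int.natCast_dvd.mpr this
  have hd2 : ¬ (p : ℤ) ∣ lam2 := by
    intro hc
    exact hp2 (Nat.mem_primeFactors.mpr ⟨hpp, Int.natCast_dvd.mp hc, Int.natAbs_ne_zero.mpr hl2⟩)
  refine ⟨p, hpp, hd1, hd2, ?_⟩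
  intro hc
  apply hd2
  have h1 : (p:ℤ) ∣ lam1 - lam2 := hc.trans hdvd
  have h2 : (p:ℤ) ∣ lam1 - (lam1 - lam2) := dvd_sub hd1 h1
  simpa using h2

lemma IsIntQ.add' {a b : ℚ} (ha : IsIntQ a) (hb : IsIntQ b) : IsIntQ (a + b) := by
  obtain ⟨x, rfl⟩ := ha; obtain ⟨y, rfl⟩ := hb; exact ⟨x + y, by push_cast; ring⟩

lemma IsIntQ.mul' {a b : ℚ} (ha : IsIntQ a) (hb : IsIntQ b) : IsIntQ (a * b) := by
  obtain ⟨x, rfl⟩ := ha; obtain ⟨y, rfl⟩ := hb; exact ⟨x * y, by push_cast; ring⟩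

lemma funext_fin2 {α : Type*} {g h : Fin 2 → α} (h0 : g 0 = h 0) (h1 : g 1 = h 1) : g = h := by
  funext i
  match i with
  | ⟨0,_⟩ => exact h0
  | ⟨1,_⟩ => exact h1

lemma mulVec_app0 (a b c d : ℚ) (f : Fin 2 → ℚ) :
    (!![a,b;c,d] *ᵥ f) 0 = a * f 0 + b * f 1 := by
  simp [Matrix.mulVec, dotProduct, Fin.sum_univ_two]

lemma mulVec_app1 (a b c d : ℚ) (f : Fin 2 → ℚ) :
    (!![a,b;c,d] *ᵥ f) 1 = c * f 0 + d * f 1 := by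
  simp [Matrix.mulVec, dotProduct, Fin.sum_univ_two]

/-- the conjugated diagonal matrix, explicitly -/
noncomputable def Cmat (lam1 lam2 u v : ℤ) (j : ℤ) : Matrix (Fin 2) (Fin 2) ℚ :=
  !![(lam1:ℚ)^j, (u:ℚ) * (((lam2:ℚ)^j - (lam1:ℚ)^j)/(v:ℚ)); 0, (lam2:ℚ)^j]

/-- integrality condition at exponent `j` -/
def CondZ (lam1 lam2 u v : ℤ) (w : Fin 2 → ℚ) (j : ℤ) : Prop :=
  IsIntQ ((lam1:ℚ)^j * w 0 + (u:ℚ) * (((lam2:ℚ)^j - (lam1:ℚ)^j)/(v:ℚ)) * w 1)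
    ∧ IsIntQ ((lam2:ℚ)^j * w 1)

section char

variable {lam1 lam2 u v : ℤ}
variable (hl1 : lam1 ≠ 0) (hl2 : lam2 ≠ 0) (hv : v ≠ 0)

lemma Cmat_zero : Cmat lam1 lam2 u v 0 = 1 := by
  unfold Cmat
  ext i k
  fin_cases i <;> fin_cases k <;> simp [Matrix.one_fin_two]

include hl1 hl2 hv

lemma Cmat_mul (j l : ℤ) : Cmat lam1 lam2 u v j * Cmat lam1 lam2 u v l
    = Cmat lam1 lam2 u v (j + l) := by
  have hvQ : (v:ℚ) ≠ 0 := Int.cast_ne_zero.mpr hv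
  have hl1Q : (lam1:ℚ) ≠ 0 := Int.cast_ne_zero.mpr hl1
  have hl2Q : (lam2:ℚ) ≠ 0 := Int.cast_ne_zero.mpr hl2
  unfold Cmat
  rw [Matrix.mul_fin_two]
  ext i k
  fin_cases i <;> fin_cases k <;>
    simp [zpow_add₀ hl1Q, zpow_add₀ hl2Q] <;> field_simp <;> ring

lemma Cmat_inv (j : ℤ) : (Cmat lam1 lam2 u v j)⁻¹ = Cmat lam1 lam2 u v (-j) := by
  apply Matrix.inv_eq_right_inv
  rw [Cmat_mul hl1 hl2 hv, add_neg_cancel, Cmat_zero]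

variable (A : Matrix (Fin 2) (Fin 2) ℤ)
variable (hA : Qmat A = !![(1 : ℚ), (u : ℚ); 0, (v : ℚ)] * !![(lam1 : ℚ), 0; 0, (lam2 : ℚ)] *
        (!![(1 : ℚ), (u : ℚ); 0, (v : ℚ)])⁻¹)

include hA

lemma QA_eq : Qmat A = Cmat lam1 lam2 u v 1 := by
  have hvQ : (v:ℚ) ≠ 0 := Int.cast_ne_zero.mpr hv
  have hMinv : (!![(1 : ℚ), (u : ℚ); 0, (v : ℚ)])⁻¹ = !![(1 : ℚ), -(u:ℚ)/v; 0, 1/v] := by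
    apply Matrix.inv_eq_right_inv
    rw [Matrix.mul_fin_two]
    ext i k
    fin_cases i <;> fin_cases k <;> simp [Matrix.one_fin_two] <;> field_simp <;> ring
  rw [hA, hMinv, Matrix.mul_fin_two, Matrix.mul_fin_two]
  unfold Cmat
  ext i k
  fin_cases i <;> fin_cases k <;> simp <;> field_simp <;> ring

lemma QA_zpow (j : ℤ) : Qmat A ^ j = Cmat lam1 lam2 u v j := by
  have hnat : ∀ n : ℕ, Qmat A ^ n = Cmat lam1 lam2 u v n := by
    intro n
    induction n with
    | zero => simp [Cmat_zero]
    | succ n ih =>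
        rw [pow_succ, ih, QA_eq hl1 hl2 hv A hA, Cmat_mul hl1 hl2 hv]
        norm_cast
  rcases j with n | n
  · rw [Int.ofNat_eq_natCast, zpow_natCast, hnat]
  · rw [zpow_negSucc, hnat, Cmat_inv hl1 hl2 hv]
    congr 1

lemma mem_GA_iff_int (w : Fin 2 → ℚ) :
    w ∈ GA A ↔ ∃ j : ℤ, CondZ lam1 lam2 u v w j := by
  have hvQ : (v:ℚ) ≠ 0 := Int.cast_ne_zero.mpr hv
  have hl1Q : (lam1:ℚ) ≠ 0 := Int.cast_ne_zero.mpr hl1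
  have hl2Q : (lam2:ℚ) ≠ 0 := Int.cast_ne_zero.mpr hl2
  constructor
  · rintro ⟨x, k, hw⟩
    rw [QA_zpow hl1 hl2 hv A hA] at hw
    have h0 := congrFun hw 0
    have h1 := congrFun hw 1
    unfold Cmat at h0 h1
    rw [mulVec_app0] at h0
    rw [mulVec_app1] at h1
    set P1 := (lam1:ℚ)^k with hP1def
    set P2 := (lam2:ℚ)^k with hP2def
    have hP1 : P1 ≠ 0 := zpow_ne_zero _ hl1Q
    have hP2 : P2 ≠ 0 := zpow_ne_zero _ hl2Q
    refine ⟨-k, ⟨x 0, ?_⟩, ⟨x 1, ?_⟩⟩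
    · rw [_root_.zpow_neg, _root_.zpow_neg, ← hP1def, ← hP2def, h0, h1]
      field_simp
      ring
    · rw [_root_.zpow_neg, ← hP2def, h1]
      field_simp
      ring
  · rintro ⟨j, ⟨c, hc⟩, ⟨d, hd⟩⟩
    refine ⟨![c, d], -j, ?_⟩
    rw [QA_zpow hl1 hl2 hv A hA]
    set P1 := (lam1:ℚ)^j with hP1def
    set P2 := (lam2:ℚ)^j with hP2def
    have hP1 : P1 ≠ 0 := zpow_ne_zero _ hl1Q
    have hP2 : P2 ≠ 0 := zpow_ne_zero _ hl2Q
    apply funext_fin2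
    · unfold Cmat
      rw [mulVec_app0]
      simp only [Matrix.cons_val_zero, Matrix.cons_val_one, Matrix.head_cons]
      rw [_root_.zpow_neg, _root_.zpow_neg, ← hP1def, ← hP2def]
      rw [← hc, ← hd]
      field_simp
      ring
    · unfold Cmat
      rw [mulVec_app1]
      simp only [Matrix.cons_val_zero, Matrix.cons_val_one, Matrix.head_cons]
      rw [_root_.zpow_neg, ← hP2def]
      rw [← hd]
      field_simp
      ring

variable (hdvd : v ∣ lam1 - lam2)
include hdvd

omit hA in
lemma condZ_step (w : Fin 2 → ℚ) (j : ℤ) (h : CondZ lam1 lam2 u v w j) :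
    CondZ lam1 lam2 u v w (j + 1) := by
  have hvQ : (v:ℚ) ≠ 0 := Int.cast_ne_zero.mpr hv
  have hl1Q : (lam1:ℚ) ≠ 0 := Int.cast_ne_zero.mpr hl1
  have hl2Q : (lam2:ℚ) ≠ 0 := Int.cast_ne_zero.mpr hl2
  obtain ⟨c0, hc0⟩ := hdvd
  have hc0Q : ((lam1:ℚ) - lam2) = (v:ℚ) * (c0:ℚ) := by
    exact_mod_cast congrArg (Int.cast : ℤ → ℚ) hc0
  obtain ⟨hE, hF⟩ := h
  constructor
  · have hconst : IsIntQ ((u : ℚ) * (-(c0:ℚ))) := ⟨u * (-c0), by push_cast; ring⟩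
    have := (IsIntQ.mul' ⟨lam1, rfl⟩ hE).add' (IsIntQ.mul' hconst hF)
    convert this using 1
    rw [zpow_add_one₀ hl1Q, zpow_add_one₀ hl2Q]
    field_simp
    linear_combination (-(u:ℚ) * (lam2:ℚ)^j * w 1) * hc0Q
  · have := IsIntQ.mul' ⟨lam2, rfl⟩ hF
    convert this using 1
    rw [zpow_add_one₀ hl2Q]
    ring

lemma mem_GA_iff (w : Fin 2 → ℚ) :
    w ∈ GA A ↔ ∃ k : ℕ, IsIntQ ((lam1:ℚ)^k * w 0
        + (u:ℚ) * (((lam2:ℚ)^k - (lam1:ℚ)^k)/(v:ℚ)) * w 1)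
      ∧ IsIntQ ((lam2:ℚ)^k * w 1) := by
  rw [mem_GA_iff_int hl1 hl2 hv A hA]
  have hmono : ∀ (m : ℕ) (j : ℤ), CondZ lam1 lam2 u v w j → CondZ lam1 lam2 u v w (j + m) := by
    intro m
    induction m with
    | zero => intro j h; simpa using h
    | succ m ih =>
        intro j h
        have h' : (j + ((m+1 : ℕ) : ℤ)) = (j + m) + 1 := by push_cast; ring
        rw [h']
        exact condZ_step hl1 hl2 hv hdvd w _ (ih j h)
  constructor
  · rintro ⟨j, hj⟩
    refine ⟨j.toNat, ?_, ?_⟩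
    all_goals {
      have h2 : CondZ lam1 lam2 u v w (j + ((j.toNat : ℤ) - j).toNat) := hmono _ _ hj
      have h3 : (j + (((j.toNat : ℤ) - j).toNat : ℤ)) = (j.toNat : ℤ) := by omega
      rw [h3] at h2
      obtain ⟨h4, h5⟩ := h2
      rw [zpow_natCast, zpow_natCast] at h4
      rw [zpow_natCast] at h5
      first | exact h4 | exact h5
    }
  · rintro ⟨k, h4, h5⟩
    refine ⟨(k : ℤ), ⟨?_, ?_⟩⟩
    · rw [zpow_natCast, zpow_natCast]; exact h4
    · rw [zpow_natCast]; exact h5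

end char

section descent

variable {lam1 lam2 u v : ℤ}
variable (hl1 : lam1 ≠ 0) (hl2 : lam2 ≠ 0) (hv : v ≠ 0) (hdvd : v ∣ lam1 - lam2)

omit hl1 in
lemma pow_shift {lam : ℤ} {x : ℚ} {m : ℕ} (h : IsIntQ (x * (lam:ℚ)^m)) :
    ∀ n : ℕ, m ≤ n → IsIntQ ((lam:ℚ)^n * x) := by
  intro n hn
  obtain ⟨a, ha⟩ := h
  have hx : (lam:ℚ)^n * x = (lam:ℚ)^(n-m) * (x * (lam:ℚ)^m) := by
    rw [mul_comm x, ← mul_assoc, ← pow_add]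
    congr 2
    omega
  rw [hx, ha]
  exact IsIntQ.mul' ⟨lam^(n-m), by push_cast; rfl⟩ ⟨a, rfl⟩

include hl1 hl2 hv hdvd

lemma descent (x₁ x₂ : ℚ) (h1 : x₁ ∈ Zinv lam1) (h2 : x₂ ∈ Zinv lam2)
    (h3 : (x₁ - x₂)/(v:ℚ) ∈ Zinv (lam1*lam2)) :
    ∃ n : ℕ, IsIntQ ((lam1:ℚ)^n * x₁) ∧ IsIntQ ((lam2:ℚ)^n * x₂) ∧
      IsIntQ (((lam2:ℚ)^n * x₂ - (lam1:ℚ)^n * x₁)/(v:ℚ)) := by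
  have hvQ : (v:ℚ) ≠ 0 := Int.cast_ne_zero.mpr hv
  have hl1Q : (lam1:ℚ) ≠ 0 := Int.cast_ne_zero.mpr hl1
  have hl2Q : (lam2:ℚ) ≠ 0 := Int.cast_ne_zero.mpr hl2
  obtain ⟨m1, hm1⟩ := (mem_Zinv_iff hl1).mp h1
  obtain ⟨m2, hm2⟩ := (mem_Zinv_iff hl2).mp h2
  obtain ⟨M, hM⟩ := (mem_Zinv_iff (mul_ne_zero hl1 hl2)).mp h3
  set g : ℕ → ℚ := fun n => ((lam2:ℚ)^n * x₂ - (lam1:ℚ)^n * x₁)/(v:ℚ) with hgdef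
  set n₀ : ℕ := M + (m1 + m2) with hn₀
  set N : ℕ := M + m1 with hN
  have fact1 : ∀ n : ℕ, m1 ≤ n → IsIntQ ((lam1:ℚ)^n * x₁) := pow_shift hm1
  have fact2 : ∀ n : ℕ, m2 ≤ n → IsIntQ ((lam2:ℚ)^n * x₂) := pow_shift hm2
  -- the shift relation
  obtain ⟨c0, hc0⟩ := id hdvd
  have hc0Q : ((lam1:ℚ) - lam2) = (v:ℚ) * (c0:ℚ) := by
    exact_mod_cast congrArg (Int.cast : ℤ → ℚ) hc0
  have hgstep : ∀ n : ℕ, g (n+1) = (lam1:ℚ) * g n + (-(c0:ℚ)) * ((lam2:ℚ)^n * x₂) := by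
    intro n
    rw [hgdef]
    simp only []
    rw [pow_succ, pow_succ]
    field_simp
    linear_combination (-(lam2:ℚ)^n * x₂) * hc0Q
  -- integrality of lam1^N * g n₀
  have fact3 : IsIntQ ((lam1:ℚ)^N * g n₀) := by
    obtain ⟨wn, hwn⟩ : v ∣ lam1^n₀ - lam2^n₀ := hdvd.trans (sub_dvd_pow_sub_pow lam1 lam2 n₀)
    have hwnQ : (lam1:ℚ)^n₀ - (lam2:ℚ)^n₀ = (v:ℚ) * (wn:ℚ) := by
      exact_mod_cast congrArg (Int.cast : ℤ → ℚ) hwn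
    have hg : g n₀ = -(lam2:ℚ)^n₀ * ((x₁ - x₂)/(v:ℚ)) - (wn:ℚ) * x₁ := by
      rw [hgdef]
      field_simp
      linear_combination (-x₁) * hwnQ
    have key : (lam1:ℚ)^N * g n₀ =
        (-((lam1:ℚ)^m1 * (lam2:ℚ)^(m1+m2))) * (((x₁-x₂)/(v:ℚ)) * ((lam1*lam2 : ℤ):ℚ)^M)
          + (-((wn:ℚ) * (lam1:ℚ)^M)) * (x₁ * (lam1:ℚ)^m1) := by
      rw [hg, hN, hn₀]
      push_cast
      ring
    rw [key]
    obtain ⟨e, he⟩ := hM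
    obtain ⟨a, ha⟩ := hm1
    rw [he, ha]
    have hintc1 : IsIntQ (-((lam1:ℚ)^m1 * (lam2:ℚ)^(m1+m2))) :=
      ⟨-(lam1^m1 * lam2^(m1+m2)), by push_cast; ring⟩
    have hintc2 : IsIntQ (-((wn:ℚ) * (lam1:ℚ)^M)) := ⟨-(wn * lam1^M), by push_cast; ring⟩
    exact (hintc1.mul' ⟨e, rfl⟩).add' (hintc2.mul' ⟨a, rfl⟩)
  -- descend
  have hind : ∀ j : ℕ, j ≤ N → IsIntQ ((lam1:ℚ)^(N-j) * g (n₀+j)) := by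
    intro j
    induction j with
    | zero => intro _; simpa using fact3
    | succ j ih =>
        intro hj
        have hprev := ih (by omega)
        have hsplit : (lam1:ℚ)^(N-j) = (lam1:ℚ)^(N-(j+1)) * lam1 := by
          rw [← pow_succ]
          congr 1
          omega
        have hstep := hgstep (n₀ + j)
        have h2' : IsIntQ ((lam2:ℚ)^(n₀+j) * x₂) := fact2 _ (by omega)
        obtain ⟨z1, hz1⟩ := hprev
        obtain ⟨z2, hz2⟩ := h2'
        refine ⟨z1 + -(c0 * lam1^(N-(j+1))) * z2, ?_⟩
        have : (lam1:ℚ)^(N-(j+1)) * g (n₀+(j+1)) =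
            (lam1:ℚ)^(N-j) * g (n₀+j) + (-(c0:ℚ) * (lam1:ℚ)^(N-(j+1))) * ((lam2:ℚ)^(n₀+j) * x₂) := by
          have harg : n₀ + (j+1) = (n₀ + j) + 1 := by omega
          rw [harg, hgstep (n₀+j), hsplit]
          ring
        rw [this, hz1, hz2]
        push_cast
        ring
  have hfin := hind N le_rfl
  simp only [Nat.sub_self, pow_zero, one_mul] at hfin
  exact ⟨n₀ + N, fact1 _ (by omega), fact2 _ (by omega), hfin⟩

end descent
section maps

variable {lam1 lam2 u v : ℤ}
variable (hl1 : lam1 ≠ 0) (hl2 : lam2 ≠ 0) (hv : v ≠ 0) (hdvd : v ∣ lam1 - lam2)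
variable (A : Matrix (Fin 2) (Fin 2) ℤ)
variable (hA : Qmat A = !![(1 : ℚ), (u : ℚ); 0, (v : ℚ)] * !![(lam1 : ℚ), 0; 0, (lam2 : ℚ)] *
        (!![(1 : ℚ), (u : ℚ); 0, (v : ℚ)])⁻¹)

include hl1 hl2 hv hdvd hA

lemma maps_GA (x₁ x₂ : ℚ) (h1 : x₁ ∈ Zinv lam1) (h2 : x₂ ∈ Zinv lam2)
    (h3 : (x₁ - x₂)/(v:ℚ) ∈ Zinv (lam1*lam2)) (w : Fin 2 → ℚ) (hw : w ∈ GA A) :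
    (!![x₁, (u:ℚ)*(x₂-x₁)/(v:ℚ); 0, x₂] *ᵥ w) ∈ GA A := by
  have hvQ : (v:ℚ) ≠ 0 := Int.cast_ne_zero.mpr hv
  rw [mem_GA_iff hl1 hl2 hv A hA hdvd] at hw ⊢
  obtain ⟨k, hc', hd'⟩ := hw
  obtain ⟨n, hn1, hn2, hn3⟩ := descent hl1 hl2 hv hdvd x₁ x₂ h1 h2 h3
  refine ⟨k + n, ?_, ?_⟩
  · rw [mulVec_app0, mulVec_app1]
    have big := (hn1.mul' hc').add' ((IsIntQ.mul' ⟨u, rfl⟩ hd').mul' hn3)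
    convert big using 1
    field_simp
    ring
  · rw [mulVec_app1]
    have big := hn2.mul' hd'
    convert big using 1
    field_simp
    ring

end maps
lemma mulVec_S0 (S : Matrix (Fin 2) (Fin 2) ℚ) (f : Fin 2 → ℚ) :
    (S *ᵥ f) 0 = S 0 0 * f 0 + S 0 1 * f 1 := by
  simp [Matrix.mulVec, dotProduct, Fin.sum_univ_two]

lemma mulVec_S1 (S : Matrix (Fin 2) (Fin 2) ℚ) (f : Fin 2 → ℚ) :
    (S *ᵥ f) 1 = S 1 0 * f 0 + S 1 1 * f 1 := by
  simp [Matrix.mulVec, dotProduct, Fin.sum_univ_two]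

section extract

variable {lam1 lam2 u v : ℤ}
variable (hl1 : lam1 ≠ 0) (hl2 : lam2 ≠ 0) (hv : v ≠ 0) (hdvd : v ∣ lam1 - lam2)
variable (huv : Int.gcd u v = 1)
variable (A : Matrix (Fin 2) (Fin 2) ℤ)
variable (hA : Qmat A = !![(1 : ℚ), (u : ℚ); 0, (v : ℚ)] * !![(lam1 : ℚ), 0; 0, (lam2 : ℚ)] *
        (!![(1 : ℚ), (u : ℚ); 0, (v : ℚ)])⁻¹)
variable (hrad1 : ¬ (rad lam1 : ℤ) ∣ (rad lam2 : ℤ))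
variable (hrad2 : ¬ (rad lam2 : ℤ) ∣ (rad lam1 : ℤ))

include hl1 hl2 hv hdvd huv hA hrad1 hrad2

lemma extract_GA (S : Matrix (Fin 2) (Fin 2) ℚ)
    (hS : ∀ w ∈ GA A, S *ᵥ w ∈ GA A) :
    S 1 0 = 0 ∧ (v:ℚ) * S 0 1 = (u:ℚ) * (S 1 1 - S 0 0) ∧
      S 0 0 ∈ Zinv lam1 ∧ S 1 1 ∈ Zinv lam2 ∧
      (S 0 0 - S 1 1)/(v:ℚ) ∈ Zinv (lam1 * lam2) := by
  have hvQ : (v:ℚ) ≠ 0 := Int.cast_ne_zero.mpr hv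
  have hl1Q : (lam1:ℚ) ≠ 0 := Int.cast_ne_zero.mpr hl1
  have hl2Q : (lam2:ℚ) ≠ 0 := Int.cast_ne_zero.mpr hl2
  obtain ⟨p, hpp, hpl1, hpl2, hpv⟩ := exists_prime_dvd lam1 lam2 v hl1 hl2 hdvd hrad1
  obtain ⟨q, hqp, hql2, hql1, hqv⟩ := exists_prime_dvd lam2 lam1 v hl2 hl1
    (by rw [← neg_sub]; exact Dvd.dvd.neg_right hdvd) hrad2
  have hpQ : ((p:ℚ)) ≠ 0 := Nat.cast_ne_zero.mpr hpp.pos.ne'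
  have hqQ : ((q:ℚ)) ≠ 0 := Nat.cast_ne_zero.mpr hqp.pos.ne'
  obtain ⟨c1, hc1⟩ := hpl1
  obtain ⟨c2, hc2⟩ := hql2
  have hc1Q : (lam1:ℚ) = (p:ℚ) * (c1:ℚ) := by exact_mod_cast congrArg (Int.cast : ℤ → ℚ) hc1
  have hc2Q : (lam2:ℚ) = (q:ℚ) * (c2:ℚ) := by exact_mod_cast congrArg (Int.cast : ℤ → ℚ) hc2
  -- Step 1 : ![1/p^n, 0] ∈ GA
  have e1div : ∀ n : ℕ, (![1/(p:ℚ)^n, 0] : Fin 2 → ℚ) ∈ GA A := by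
    intro n
    rw [mem_GA_iff hl1 hl2 hv A hA hdvd]
    refine ⟨n, ⟨c1^n, ?_⟩, ⟨0, by simp⟩⟩
    simp only [Matrix.cons_val_zero, Matrix.cons_val_one, Matrix.head_cons]
    rw [hc1Q]
    push_cast
    field_simp
    ring
  -- Step 2 : S 1 0 = 0
  have hS10 : S 1 0 = 0 := by
    apply no_inf_div hpp hl2 hpl2
    intro n
    have hmem := hS _ (e1div n)
    rw [mem_GA_iff hl1 hl2 hv A hA hdvd] at hmem
    obtain ⟨k, _, h2⟩ := hmem
    rw [mulVec_S1] at h2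
    refine ⟨k, ?_⟩
    simp only [Matrix.cons_val_zero, Matrix.cons_val_one, Matrix.head_cons] at h2
    convert h2 using 1 <;> (field_simp; try ring)
  -- Step 3 : S 0 0 ∈ Zinv lam1
  have he1 : (![1, 0] : Fin 2 → ℚ) ∈ GA A := by
    rw [mem_GA_iff hl1 hl2 hv A hA hdvd]
    exact ⟨0, ⟨1, by norm_num⟩, ⟨0, by norm_num⟩⟩
  have hS00 : S 0 0 ∈ Zinv lam1 := by
    have hmem := hS _ he1
    rw [mem_GA_iff hl1 hl2 hv A hA hdvd] at hmem
    obtain ⟨k, h1, _⟩ := hmem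
    rw [mulVec_S0, mulVec_S1] at h1
    simp only [Matrix.cons_val_zero, Matrix.cons_val_one, Matrix.head_cons, hS10, mul_zero, mul_one, zero_mul, one_mul, add_zero, zero_add] at h1
    rw [mem_Zinv_iff hl1]
    refine ⟨k, ?_⟩
    convert h1 using 1 <;> ring
  -- Step 4 : w' = S *ᵥ ![u, v] and its divisibility by q^n
  have huvdiv : ∀ n : ℕ, (![(u:ℚ)/(q:ℚ)^n, (v:ℚ)/(q:ℚ)^n] : Fin 2 → ℚ) ∈ GA A := by
    intro n
    rw [mem_GA_iff hl1 hl2 hv A hA hdvd]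
    refine ⟨n, ⟨u * c2^n, ?_⟩, ⟨v * c2^n, ?_⟩⟩
    · simp only [Matrix.cons_val_zero, Matrix.cons_val_one, Matrix.head_cons]
      rw [hc2Q]
      push_cast
      field_simp
      ring
    · simp only [Matrix.cons_val_zero, Matrix.cons_val_one, Matrix.head_cons]
      rw [hc2Q]
      push_cast
      field_simp
      ring
  -- Step 5 : (S *ᵥ ![u,v]) 0 = u * S 1 1
  have halpha : (u:ℚ) * S 0 0 + (v:ℚ) * S 0 1 = (u:ℚ) * S 1 1 := by
    have hzero : (v:ℚ) * ((u:ℚ) * S 0 0 + (v:ℚ) * S 0 1 - (u:ℚ) * S 1 1) = 0 := by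
      apply no_inf_div hqp hl1 hql1
      intro n
      have hmem := hS _ (huvdiv n)
      rw [mem_GA_iff hl1 hl2 hv A hA hdvd] at hmem
      obtain ⟨k, h1, h2⟩ := hmem
      rw [mulVec_S0] at h1
      rw [mulVec_S1] at h1 h2
      simp only [Matrix.cons_val_zero, Matrix.cons_val_one, Matrix.head_cons, hS10, mul_zero, mul_one, zero_mul, one_mul, add_zero, zero_add] at h1 h2
      have hnegu : IsIntQ (-(u:ℚ)) := ⟨-u, by push_cast; ring⟩
      have big := (IsIntQ.mul' ⟨v, rfl⟩ h1).add' (IsIntQ.mul' hnegu h2)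
      refine ⟨k, ?_⟩
      convert big using 1
      field_simp
      ring
    have := mul_eq_zero.mp hzero
    rcases this with h | h
    · exact absurd h hvQ
    · linarith
  -- Step 6 : S 1 1 ∈ Zinv lam2
  obtain ⟨s, t, hst⟩ := Int.isCoprime_iff_gcd_eq_one.mpr huv
  have hstQ : (s:ℚ) * (u:ℚ) + (t:ℚ) * (v:ℚ) = 1 := by exact_mod_cast congrArg (Int.cast : ℤ → ℚ) hst
  have heuv : (![(u:ℚ), (v:ℚ)] : Fin 2 → ℚ) ∈ GA A := by
    have := huvdiv 0
    simpa using this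
  have hS11 : S 1 1 ∈ Zinv lam2 := by
    have hmem := hS _ heuv
    rw [mem_GA_iff hl1 hl2 hv A hA hdvd] at hmem
    obtain ⟨k, h1, h2⟩ := hmem
    rw [mulVec_S0] at h1
    rw [mulVec_S1] at h1 h2
    simp only [Matrix.cons_val_zero, Matrix.cons_val_one, Matrix.head_cons, hS10, mul_zero, mul_one, zero_mul, one_mul, add_zero, zero_add] at h1 h2
    rw [mem_Zinv_iff hl2]
    refine ⟨k, ?_⟩
    have hu1 : IsIntQ ((u:ℚ) * ((lam2:ℚ)^k * S 1 1)) := by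
      convert h1 using 1
      rw [show S 0 0 * (u:ℚ) + S 0 1 * (v:ℚ) = (u:ℚ) * S 1 1 by linarith [halpha]]
      field_simp
      ring
    have hv1 : IsIntQ ((v:ℚ) * ((lam2:ℚ)^k * S 1 1)) := by
      convert h2 using 1
      ring
    have big := (IsIntQ.mul' ⟨s, rfl⟩ hu1).add' (IsIntQ.mul' ⟨t, rfl⟩ hv1)
    convert big using 1
    linear_combination ((lam2:ℚ)^k * S 1 1) * hstQ.symm
  -- Step 7 : the coupling condition
  have he2 : (![0, 1] : Fin 2 → ℚ) ∈ GA A := by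
    rw [mem_GA_iff hl1 hl2 hv A hA hdvd]
    exact ⟨0, ⟨0, by norm_num⟩, ⟨1, by norm_num⟩⟩
  have hS01 : (v:ℚ) * S 0 1 = (u:ℚ) * (S 1 1 - S 0 0) := by
    linarith [halpha]
  have hcouple : (S 0 0 - S 1 1)/(v:ℚ) ∈ Zinv (lam1 * lam2) := by
    have hmem := hS _ he2
    rw [mem_GA_iff hl1 hl2 hv A hA hdvd] at hmem
    obtain ⟨k, h1, _⟩ := hmem
    rw [mulVec_S0, mulVec_S1] at h1
    simp only [Matrix.cons_val_zero, Matrix.cons_val_one, Matrix.head_cons, hS10, mul_zero, mul_one, zero_mul, one_mul, add_zero, zero_add] at h1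
    -- h1 : IsIntQ (lam1^k * S 0 1 + u * ((lam2^k - lam1^k)/v) * S 1 1)
    obtain ⟨wk, hwk⟩ : v ∣ lam1^k - lam2^k := hdvd.trans (sub_dvd_pow_sub_pow lam1 lam2 k)
    have hwkQ : (lam1:ℚ)^k - (lam2:ℚ)^k = (v:ℚ) * (wk:ℚ) := by
      exact_mod_cast congrArg (Int.cast : ℤ → ℚ) hwk
    have hl12 : lam1 * lam2 ≠ 0 := mul_ne_zero hl1 hl2
    have hE : ((u:ℚ) * (S 1 1 - S 0 0)/(v:ℚ)) ∈ Zinv (lam1*lam2) := by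
      have hEk : ((u:ℚ) * (S 1 1 - S 0 0)/(v:ℚ)) * (lam2:ℚ)^k ∈ Zinv (lam1*lam2) := by
        have hterm1 : ((lam1:ℚ)^k * S 0 1 + (u:ℚ) * (((lam2:ℚ)^k - (lam1:ℚ)^k)/(v:ℚ)) * S 1 1)
            ∈ Zinv (lam1*lam2) := Zinv.of_isIntQ hl12 h1
        have hterm2 : ((u:ℚ) * (wk:ℚ)) * S 0 0 ∈ Zinv (lam1*lam2) := by
          have : S 0 0 ∈ Zinv (lam1*lam2) := Zinv_left_subset hl1 hl2 hS00
          have h' := Zinv.intMul hl12 (u * wk) this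
          convert h' using 2
          push_cast
          ring
        have hsum := Zinv.add hl12 hterm1 hterm2
        convert hsum using 1
        field_simp
        linear_combination (-(lam1:ℚ)^k) * hS01 + ((u:ℚ) * S 0 0) * hwkQ
      have hdiv := Zinv.div_pow_right hl1 hl2 hEk k
      convert hdiv using 1
      field_simp
    have hsub : (S 1 1 - S 0 0) ∈ Zinv (lam1*lam2) :=
      Zinv.sub hl12 (Zinv_right_subset hl1 hl2 hS11) (Zinv_left_subset hl1 hl2 hS00)
    have hfin : (S 1 1 - S 0 0)/(v:ℚ) ∈ Zinv (lam1*lam2) := by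
      have h1' := Zinv.intMul hl12 s hE
      have h2' := Zinv.intMul hl12 t hsub
      have hsum := Zinv.add hl12 h1' h2'
      convert hsum using 1
      field_simp
      linear_combination ((S 1 1 - S 0 0)) * hstQ.symm
    have := Zinv.neg hl12 hfin
    convert this using 1
    field_simp
    ring
  exact ⟨hS10, hS01, hS00, hS11, hcouple⟩

end extract
section assembly

variable {lam1 lam2 u v : ℤ}

lemma conj_diag (hv : v ≠ 0) (a b : ℚ) :
    !![(1 : ℚ), (u : ℚ); 0, (v : ℚ)] * !![a, 0; 0, b] * (!![(1 : ℚ), (u : ℚ); 0, (v : ℚ)])⁻¹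
      = !![a, (u:ℚ) * (b - a)/(v:ℚ); 0, b] := by
  have hvQ : (v:ℚ) ≠ 0 := Int.cast_ne_zero.mpr hv
  have hMinv : (!![(1 : ℚ), (u : ℚ); 0, (v : ℚ)])⁻¹ = !![(1 : ℚ), -(u:ℚ)/v; 0, 1/v] := by
    apply Matrix.inv_eq_right_inv
    rw [Matrix.mul_fin_two]
    ext i k
    fin_cases i <;> fin_cases k <;> simp [Matrix.one_fin_two] <;> field_simp <;> ring
  rw [hMinv, Matrix.mul_fin_two, Matrix.mul_fin_two]
  ext i k
  fin_cases i <;> fin_cases k <;> simp <;> field_simp <;> ring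

lemma mul_app00 (B T : Matrix (Fin 2) (Fin 2) ℚ) :
    (B * T) 0 0 = B 0 0 * T 0 0 + B 0 1 * T 1 0 := by
  simp [Matrix.mul_apply, Fin.sum_univ_two]

lemma mul_app11 (B T : Matrix (Fin 2) (Fin 2) ℚ) :
    (B * T) 1 1 = B 1 0 * T 0 1 + B 1 1 * T 1 1 := by
  simp [Matrix.mul_apply, Fin.sum_univ_two]

theorem stmt8 (lam1 lam2 u v : ℤ) (hl1 : lam1 ≠ 0) (hl2 : lam2 ≠ 0) (hv : v ≠ 0)
    (huv : Int.gcd u v = 1) (hdvd : v ∣ lam1 - lam2)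
    (A : Matrix (Fin 2) (Fin 2) ℤ)
    (hA : Qmat A =
      !![(1 : ℚ), (u : ℚ); 0, (v : ℚ)] * !![(lam1 : ℚ), 0; 0, (lam2 : ℚ)] *
        (!![(1 : ℚ), (u : ℚ); 0, (v : ℚ)])⁻¹)
    (hrad1 : ¬ (rad lam1 : ℤ) ∣ (rad lam2 : ℤ))
    (hrad2 : ¬ (rad lam2 : ℤ) ∣ (rad lam1 : ℤ))
    (T : Matrix (Fin 2) (Fin 2) ℚ) :
    (IsUnit T ∧ (fun w => T *ᵥ w) '' GA A = GA A) ↔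
      ∃ x₁ x₂ : ℚ, ZinvUnit lam1 x₁ ∧ ZinvUnit lam2 x₂ ∧
        (x₁ - x₂) / (v : ℚ) ∈ Zinv (lam1 * lam2) ∧
        T = !![(1 : ℚ), (u : ℚ); 0, (v : ℚ)] * !![x₁, 0; 0, x₂] *
              (!![(1 : ℚ), (u : ℚ); 0, (v : ℚ)])⁻¹ := by
  have hvQ : (v:ℚ) ≠ 0 := Int.cast_ne_zero.mpr hv
  have hl12 : lam1 * lam2 ≠ 0 := mul_ne_zero hl1 hl2
  constructor
  · rintro ⟨hT, himg⟩
    have hfwd : ∀ w ∈ GA A, T *ᵥ w ∈ GA A := by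
      intro w hw
      rw [← himg]
      exact Set.mem_image_of_mem _ hw
    obtain ⟨U, hU⟩ := hT
    set B : Matrix (Fin 2) (Fin 2) ℚ := ↑U⁻¹ with hBdef
    have hBT : B * T = 1 := by rw [hBdef, ← hU]; exact U.inv_mul
    have hTB : T * B = 1 := by rw [hBdef, ← hU]; exact U.mul_inv
    have hbwd : ∀ w ∈ GA A, B *ᵥ w ∈ GA A := by
      intro w hw
      rw [← himg] at hw
      obtain ⟨w', hw', rfl⟩ := hw
      rw [Matrix.mulVec_mulVec, hBT, Matrix.one_mulVec]
      exact hw'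
    obtain ⟨hT10, hT01, hT00, hT11, hTc⟩ :=
      extract_GA hl1 hl2 hv hdvd huv A hA hrad1 hrad2 T hfwd
    obtain ⟨hB10, hB01, hB00, hB11, hBc⟩ :=
      extract_GA hl1 hl2 hv hdvd huv A hA hrad1 hrad2 B hbwd
    have hBT00 : B 0 0 * T 0 0 = 1 := by
      have := congrArg (fun X => X 0 0) hBT
      simp only [mul_app00, hT10, mul_zero, add_zero] at this
      simpa using this
    have hBT11 : B 1 1 * T 1 1 = 1 := by
      have := congrArg (fun X => X 1 1) hBT
      simp only [mul_app11, hB10, zero_mul, zero_add] at this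
      simpa using this
    have hx1ne : T 0 0 ≠ 0 := by
      intro h; rw [h, mul_zero] at hBT00; exact one_ne_zero hBT00.symm
    have hx2ne : T 1 1 ≠ 0 := by
      intro h; rw [h, mul_zero] at hBT11; exact one_ne_zero hBT11.symm
    have hB00eq : B 0 0 = (T 0 0)⁻¹ := eq_inv_of_mul_eq_one_left hBT00
    have hB11eq : B 1 1 = (T 1 1)⁻¹ := eq_inv_of_mul_eq_one_left hBT11
    refine ⟨T 0 0, T 1 1, ⟨hx1ne, hT00, by rw [← hB00eq]; exact hB00⟩,
      ⟨hx2ne, hT11, by rw [← hB11eq]; exact hB11⟩, hTc, ?_⟩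
    rw [conj_diag hv]
    ext i k
    fin_cases i <;> fin_cases k
    · simp
    · simp only [Matrix.cons_val_zero, Matrix.cons_val_one, Matrix.head_cons]
      show T 0 1 = (u:ℚ) * (T 1 1 - T 0 0) / (v:ℚ)
      rw [eq_div_iff hvQ]
      linarith [hT01]
    · simpa using hT10
    · simp
  · rintro ⟨x₁, x₂, ⟨hx1ne, hx1, hx1inv⟩, ⟨hx2ne, hx2, hx2inv⟩, hc, hTeq⟩
    have hTmat : T = !![x₁, (u:ℚ) * (x₂ - x₁)/(v:ℚ); 0, x₂] := by
      rw [hTeq, conj_diag hv]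
    constructor
    · rw [Matrix.isUnit_iff_isUnit_det]
      rw [hTmat]
      rw [Matrix.det_fin_two_of]
      simp only [mul_zero, sub_zero, zero_mul]
      exact (mul_ne_zero hx1ne hx2ne).isUnit
    · have hcinv : (x₁⁻¹ - x₂⁻¹)/(v:ℚ) ∈ Zinv (lam1 * lam2) := by
        have hmem := Zinv.intMul hl12 (-1)
          (Zinv.mul hl12 (Zinv.mul hl12 hc (Zinv_left_subset hl1 hl2 hx1inv))
            (Zinv_right_subset hl1 hl2 hx2inv))
        convert hmem using 1
        push_cast
        field_simp
        ring_nf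
      have hTinv : T * !![x₁⁻¹, (u:ℚ) * (x₂⁻¹ - x₁⁻¹)/(v:ℚ); 0, x₂⁻¹] = 1 := by
        rw [hTmat, Matrix.mul_fin_two]
        ext i k
        fin_cases i <;> fin_cases k <;>
          simp [Matrix.one_fin_two] <;> field_simp <;> ring
      apply Set.eq_of_subset_of_subset
      · rintro _ ⟨w, hw, rfl⟩
        simp only []
        rw [hTmat]
        exact maps_GA hl1 hl2 hv hdvd A hA x₁ x₂ hx1 hx2 hc w hw
      · intro w hw
        refine ⟨!![x₁⁻¹, (u:ℚ) * (x₂⁻¹ - x₁⁻¹)/(v:ℚ); 0, x₂⁻¹] *ᵥ w,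
          maps_GA hl1 hl2 hv hdvd A hA x₁⁻¹ x₂⁻¹ hx1inv hx2inv hcinv w hw, ?_⟩
        simp only []
        rw [Matrix.mulVec_mulVec, hTinv, Matrix.one_mulVec]

end assembly
end
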